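/- arXiv:2112.02322 — 5 statements merged into one kernel-verified Lean document; each statement's English description precedes it below -/
import Mathlib

section
/- Let Σ = {1,…,N} and let T : Σ^∞ × Σ^∞ → ℕ ∪ {∞} satisfy T(x,y) ≥ |x ∧ y| for all x, y, where |x ∧ y| is the length of the maximal common prefix. Fix ξ ∈ (0,1) and set ρ(x,y) = ξ^{T(x,y)}. Suppose (Σ^∞, ρ) is a pseudo-quasimetric space and let (A, ρ̃) be the induced quotient pseudo-metric space. Then (A, ρ̃) is complete: every Cauchy sequence converges. -/
/-- `ξ ^ n` for `n : ℕ∞`, with the convention `ξ ^ ⊤ = 0`. -/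
noncomputable def epow (ξ : ℝ) (n : ℕ∞) : ℝ :=
  if n = ⊤ then 0 else ξ ^ n.toNat

/-- completeness of the induced quotient pseudo-metric space. -/
theorem stmt3 {N : ℕ} (T : (ℕ → Fin N) → (ℕ → Fin N) → ℕ∞)
    (ξ : ℝ) (hξ0 : 0 < ξ) (hξ1 : ξ < 1)
    (ρ : (ℕ → Fin N) → (ℕ → Fin N) → ℝ)
    (hρ : ρ = fun x y => epow ξ (T x y))
    -- `T x y ≥ |x ∧ y|` : the surviving time dominates the common prefix length
    (hpre : ∀ x y : ℕ → Fin N, ∀ k : ℕ, (∀ i < k, x i = y i) → (k : ℕ∞) ≤ T x y)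
    -- `(Σ^∞, ρ)` is a pseudo-quasimetric space with constant `C`
    (C : ℝ) (hC : 1 ≤ C)
    (hrefl : ∀ x, ρ x x = 0)
    (hsymm : ∀ x y, ρ x y = ρ y x)
    (htri : ∀ x y z, ρ x z ≤ C * (ρ x y + ρ y z))
    -- the induced quotient pseudo-metric
    (ρt : (ℕ → Fin N) → (ℕ → Fin N) → ℝ)
    (hρt : ρt = fun x y => sInf {s | ∃ a b, ρ x a = 0 ∧ ρ y b = 0 ∧ s = ρ a b}) :
    -- completeness: every Cauchy sequence converges
    ∀ u : ℕ → (ℕ → Fin N),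
      (∀ ε > (0 : ℝ), ∃ K, ∀ m n, K ≤ m → K ≤ n → ρt (u m) (u n) < ε) →
      ∃ y : ℕ → Fin N, ∀ ε > (0 : ℝ), ∃ K, ∀ n, K ≤ n → ρt (u n) y < ε := by
  intro u hcau
  -- nonnegativity of ρ
  have hρ0 : ∀ x y, 0 ≤ ρ x y := by
    intro x y
    rw [hρ]
    simp only [epow]
    split
    · exact le_refl 0
    · positivity
  -- prefix agreement implies ρ small
  have hρle : ∀ a b : ℕ → Fin N, ∀ j : ℕ, (∀ i < j, a i = b i) → ρ a b ≤ ξ ^ j := by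
    intro a b j hij
    have hT := hpre a b j hij
    rw [hρ]
    simp only [epow]
    split
    case isTrue => positivity
    case isFalse h =>
      apply pow_le_pow_of_le_one hξ0.le hξ1.le
      have := ENat.toNat_le_toNat hT (by simpa using h)
      simpa using this
  -- the defining sets of ρt : nonempty and bounded below
  have hset : ∀ x z : ℕ → Fin N,
      ({s | ∃ a b, ρ x a = 0 ∧ ρ z b = 0 ∧ s = ρ a b} : Set ℝ).Nonempty :=
    fun x z => ⟨ρ x z, x, z, hrefl x, hrefl z, rfl⟩
  have hbdd : ∀ x z : ℕ → Fin N,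
      BddBelow ({s | ∃ a b, ρ x a = 0 ∧ ρ z b = 0 ∧ s = ρ a b} : Set ℝ) := by
    intro x z
    refine ⟨0, ?_⟩
    rintro s ⟨a, b, -, -, rfl⟩
    exact hρ0 a b
  -- a pointwise-convergent subsequence by compactness
  obtain ⟨y, -, φ, hφmono, hφtend⟩ :=
    isCompact_univ.tendsto_subseq (x := u) (fun n => Set.mem_univ (u n))
  have hcoord : ∀ i : ℕ, ∀ᶠ k in Filter.atTop, u (φ k) i = y i := by
    intro i
    have h := Filter.Tendsto.comp (continuous_apply i).continuousAt hφtend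
    simpa [nhds_discrete, Filter.tendsto_pure, Function.comp] using h
  have hpref : ∀ j : ℕ, ∀ᶠ k in Filter.atTop, ∀ i < j, u (φ k) i = y i := by
    intro j
    have h : ∀ i ∈ Finset.range j, ∀ᶠ k in Filter.atTop, u (φ k) i = y i :=
      fun i _ => hcoord i
    filter_upwards [(Finset.range j).eventually_all.2 h] with k hk i hi
    exact hk i (Finset.mem_range.2 hi)
  refine ⟨y, ?_⟩
  intro ε hε
  have hC0 : 0 < C := lt_of_lt_of_le one_pos hC
  set ε' : ℝ := ε / (2 * C ^ 2) with hε'def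
  have hε' : 0 < ε' := by positivity
  -- choose j with ξ^j < ε'
  obtain ⟨j, hj⟩ := exists_pow_lt_of_lt_one hε' hξ1
  -- Cauchy threshold
  obtain ⟨K, hK⟩ := hcau ε' hε'
  -- subsequence index with prefix agreement of length j
  obtain ⟨k₀, hk₀⟩ := (hpref j).exists_forall_of_atTop
  set k : ℕ := max K k₀ with hkdef
  set m : ℕ := φ k with hmdef
  have hmK : K ≤ m := le_trans (le_max_left K k₀) (le_trans (hφmono.le_apply) le_rfl)
  have humy : ρ (u m) y < ε' := by
    have := hρle (u m) y j (hk₀ k (le_max_right K k₀))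
    linarith
  refine ⟨K, ?_⟩
  intro n hn
  -- extract witnesses from the Cauchy bound
  have hlt : ρt (u n) (u m) < ε' := hK n m hn hmK
  rw [hρt] at hlt
  obtain ⟨s, hsmem, hslt⟩ := exists_lt_of_csInf_lt (hset (u n) (u m)) hlt
  obtain ⟨a, b, hna, hmb, rfl⟩ := hsmem
  -- bound ρ a y
  have h1 : ρ a y ≤ C * (ρ a b + ρ b y) := htri a b y
  have h2 : ρ b y ≤ C * (ρ b (u m) + ρ (u m) y) := htri b (u m) y
  have h3 : ρ b (u m) = 0 := by rw [hsymm]; exact hmb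
  have hay : ρ a y < ε := by
    have hab0 := hρ0 a b
    have humy0 := hρ0 (u m) y
    have hby0 := hρ0 b y
    rw [h3] at h2
    have : ρ a y ≤ C * ρ a b + C ^ 2 * ρ (u m) y := by nlinarith
    have hεeq : ε = 2 * C ^ 2 * ε' := by
      rw [hε'def]; field_simp
    rw [hεeq]
    have hC2 : (0:ℝ) < C ^ 2 := by positivity
    have e1 : C * ρ a b < C * ε' := by nlinarith
    have e2 : C * ε' ≤ C ^ 2 * ε' := by nlinarith
    have e3 : C ^ 2 * ρ (u m) y < C ^ 2 * ε' := by nlinarith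
    linarith
  -- conclude from the sInf
  rw [hρt]
  calc sInf {s | ∃ a' b', ρ (u n) a' = 0 ∧ ρ y b' = 0 ∧ s = ρ a' b'}
      ≤ ρ a y := csInf_le (hbdd (u n) y) ⟨a, y, hna, hrefl y, rfl⟩
    _ < ε := hay
end

section
/- Let M be a gasket automaton satisfying the γ-isolated condition, and let M' be a one-step simplification of M (either a (τ,κ)-simplification or a (τ,κ,λ)-simplification). Then M' is again a gasket automaton satisfying the γ-isolated condition. -/
/-!
Erasing edges cannot create a cycle or break uniqueness, boundary or isolation conditions,
so only gathering has to be rechecked. The erased αγ-edge `(τ, κ)` would be forced back by a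
βγ-edge `τ → b` together with an αβ-edge `b → κ`; either `κ` has no αβ-predecessor, or its
predecessor `λ` is unique and the βγ-edge `(τ, λ)` is erased as well. Conversely, the erased
`(τ, λ)` would be forced back only by an αγ-edge `τ → c` with `λ ◁_{αβ} c`, and right-uniqueness
makes that edge `(τ, κ)`, which is gone.
-/

/-- A gasket automaton, described by its three edge relations
`P_{αβ}, P_{αγ}, P_{βγ} ⊆ Σ²` (`Pab i j` means `i ◁_{αβ} j`, etc.):
right- and left-uniqueness of each relation, the gathering condition, and the
boundary condition. -/
def IsGasketRel {N : ℕ} (α β γ : Fin N)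
    (Pab Pag Pbg : Fin N → Fin N → Prop) : Prop :=
  -- right-uniqueness
  (∀ i j j', Pab i j → Pab i j' → j = j') ∧
  (∀ i j j', Pag i j → Pag i j' → j = j') ∧
  (∀ i j j', Pbg i j → Pbg i j' → j = j') ∧
  -- left-uniqueness
  (∀ i i' j, Pab i j → Pab i' j → i = i') ∧
  (∀ i i' j, Pag i j → Pag i' j → i = i') ∧
  (∀ i i' j, Pbg i j → Pbg i' j → i = i') ∧
  -- gathering: any two of `a ◁_{αγ} c`, `a ◁_{βγ} b`, `b ◁_{αβ} c` imply the third
  (∀ a b c : Fin N,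
    (Pag a c → Pbg a b → Pab b c) ∧
    (Pag a c → Pab b c → Pbg a b) ∧
    (Pbg a b → Pab b c → Pag a c)) ∧
  -- boundary: α is αγ- and αβ-minimal, β is βγ- and βα-minimal,
  -- γ is γα- and γβ-minimal
  (∀ i, ¬ Pag i α) ∧ (∀ i, ¬ Pab i α) ∧
  (∀ i, ¬ Pbg i β) ∧ (∀ i, ¬ Pab β i) ∧
  (∀ i, ¬ Pag γ i) ∧ (∀ i, ¬ Pbg γ i)

/-- The γ-isolated condition: the graph `(Σ, P_{αγ} ∪ P_{βγ})` has no directed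
cycle, and `γ` is isolated in all three relations. -/
def GammaIsolated {N : ℕ} (γ : Fin N)
    (Pab Pag Pbg : Fin N → Fin N → Prop) : Prop :=
  (∀ x : Fin N, ¬ Relation.TransGen (fun a b => Pag a b ∨ Pbg a b) x x) ∧
  (∀ i, ¬ Pag i γ ∧ ¬ Pag γ i ∧ ¬ Pbg i γ ∧ ¬ Pbg γ i ∧ ¬ Pab i γ ∧ ¬ Pab γ i)

def eraseEdge {X : Type*} (P : X → X → Prop) (a b : X) : X → X → Prop :=
  fun i j => P i j ∧ (i, j) ≠ (a, b)

theorem eraseEdge_le {X : Type*} (P : X → X → Prop) (a b : X) : eraseEdge P a b ≤ P :=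
  fun _ _ => And.left

section

variable {N : ℕ} {α β γ : Fin N} {Pab Pag Pbg Qab Qag Qbg : Fin N → Fin N → Prop}

theorem GammaIsolated.of_le (hI : GammaIsolated γ Pab Pag Pbg)
    (hab : Qab ≤ Pab) (hag : Qag ≤ Pag) (hbg : Qbg ≤ Pbg) :
    GammaIsolated γ Qab Qag Qbg := by
  obtain ⟨hacyc, hiso⟩ := hI
  refine ⟨fun x hx => hacyc x ?_, fun i => ?_⟩
  · exact Relation.TransGen.mono (fun a b => Or.imp (hag a b) (hbg a b)) x x hx
  · obtain ⟨h₁, h₂, h₃, h₄, h₅, h₆⟩ := hiso i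
    exact ⟨mt (hag _ _) h₁, mt (hag _ _) h₂, mt (hbg _ _) h₃, mt (hbg _ _) h₄,
      mt (hab _ _) h₅, mt (hab _ _) h₆⟩

theorem IsGasketRel.of_le (hG : IsGasketRel α β γ Pab Pag Pbg)
    (hab : Qab ≤ Pab) (hag : Qag ≤ Pag) (hbg : Qbg ≤ Pbg)
    (hgath : ∀ a b c : Fin N,
      (Qag a c → Qbg a b → Qab b c) ∧
      (Qag a c → Qab b c → Qbg a b) ∧
      (Qbg a b → Qab b c → Qag a c)) :
    IsGasketRel α β γ Qab Qag Qbg := by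
  obtain ⟨hRab, hRag, hRbg, hLab, hLag, hLbg, -, hα₁, hα₂, hβ₁, hβ₂, hγ₁, hγ₂⟩ := hG
  exact ⟨fun i j j' h h' => hRab i j j' (hab _ _ h) (hab _ _ h'),
    fun i j j' h h' => hRag i j j' (hag _ _ h) (hag _ _ h'),
    fun i j j' h h' => hRbg i j j' (hbg _ _ h) (hbg _ _ h'),
    fun i i' j h h' => hLab i i' j (hab _ _ h) (hab _ _ h'),
    fun i i' j h h' => hLag i i' j (hag _ _ h) (hag _ _ h'),
    fun i i' j h h' => hLbg i i' j (hbg _ _ h) (hbg _ _ h'),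
    hgath, fun i => mt (hag _ _) (hα₁ i), fun i => mt (hab _ _) (hα₂ i),
    fun i => mt (hbg _ _) (hβ₁ i), fun i => mt (hab _ _) (hβ₂ i),
    fun i => mt (hag _ _) (hγ₁ i), fun i => mt (hbg _ _) (hγ₂ i)⟩

theorem IsGasketRel.eraseEdge_ag_of_forall_not_ab (hG : IsGasketRel α β γ Pab Pag Pbg)
    {τ κ : Fin N} (hκ : ∀ l, ¬ Pab l κ) :
    IsGasketRel α β γ Pab (eraseEdge Pag τ κ) Pbg := by
  refine hG.of_le le_rfl (eraseEdge_le _ _ _) le_rfl fun a b c => ?_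
  obtain ⟨-, -, -, -, -, -, hgath, -⟩ := hG
  obtain ⟨hab, hbg, hag⟩ := hgath a b c
  refine ⟨fun h₁ h₂ => hab h₁.1 h₂, fun h₁ h₂ => hbg h₁.1 h₂, fun h₁ h₂ => ⟨hag h₁ h₂, ?_⟩⟩
  rintro ⟨-, rfl⟩
  exact hκ b h₂

theorem IsGasketRel.eraseEdge_ag_bg_of_ab (hG : IsGasketRel α β γ Pab Pag Pbg)
    {τ κ l : Fin N} (hτκ : Pag τ κ) (hlκ : Pab l κ) :
    IsGasketRel α β γ Pab (eraseEdge Pag τ κ) (eraseEdge Pbg τ l) := by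
  refine hG.of_le le_rfl (eraseEdge_le _ _ _) (eraseEdge_le _ _ _) fun a b c => ?_
  obtain ⟨-, hRag, -, hLab, -, -, hgath, -⟩ := hG
  obtain ⟨hab, hbg, hag⟩ := hgath a b c
  refine ⟨fun h₁ h₂ => hab h₁.1 h₂.1, fun h₁ h₂ => ⟨hbg h₁.1 h₂, ?_⟩,
    fun h₁ h₂ => ⟨hag h₁.1 h₂, ?_⟩⟩
  · rintro ⟨rfl, rfl⟩
    obtain rfl : c = κ := hRag _ _ _ h₁.1 hτκ
    exact h₁.2 rfl
  · rintro ⟨rfl, rfl⟩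
    obtain rfl : b = l := hLab _ _ _ h₂ hlκ
    exact h₁.2 rfl

end

theorem stmt11_general {N : ℕ} (α β γ : Fin N)
    (Pab Pag Pbg P'ab P'ag P'bg : Fin N → Fin N → Prop)
    (hG : IsGasketRel α β γ Pab Pag Pbg)
    (hI : GammaIsolated γ Pab Pag Pbg)
    (τ κ : Fin N) (hτκ : Pag τ κ)
    -- M' is a (τ,κ)-simplification or a (τ,κ,λ)-simplification of M
    (hcase :
      ((∀ l, ¬ Pab l κ) ∧ P'ab = Pab ∧
        P'ag = (fun i j => Pag i j ∧ (i, j) ≠ (τ, κ)) ∧ P'bg = Pbg) ∨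
      (∃ l, Pab l κ ∧ P'ab = Pab ∧
        P'ag = (fun i j => Pag i j ∧ (i, j) ≠ (τ, κ)) ∧
        P'bg = (fun i j => Pbg i j ∧ (i, j) ≠ (τ, l)))) :
    IsGasketRel α β γ P'ab P'ag P'bg ∧ GammaIsolated γ P'ab P'ag P'bg := by
  rcases hcase with ⟨hκ, rfl, rfl, rfl⟩ | ⟨l, hlκ, rfl, rfl, rfl⟩
  · exact ⟨hG.eraseEdge_ag_of_forall_not_ab hκ,
      hI.of_le le_rfl (eraseEdge_le Pag τ κ) le_rfl⟩
  · exact ⟨hG.eraseEdge_ag_bg_of_ab hτκ hlκ,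
      hI.of_le le_rfl (eraseEdge_le Pag τ κ) (eraseEdge_le Pbg τ l)⟩

/-- a one-step simplification of a gasket automaton satisfying
the γ-isolated condition is again a gasket automaton satisfying the
γ-isolated condition. -/
theorem stmt11 {N : ℕ} (α β γ : Fin N)
    (Pab Pag Pbg P'ab P'ag P'bg : Fin N → Fin N → Prop)
    (hG : IsGasketRel α β γ Pab Pag Pbg)
    (hI : GammaIsolated γ Pab Pag Pbg)
    (τ κ : Fin N) (hτκ : Pag τ κ)
    (hκmax1 : ∀ j, ¬ Pag κ j) (hκmax2 : ∀ j, ¬ Pbg κ j)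
    -- M' is a (τ,κ)-simplification or a (τ,κ,λ)-simplification of M
    (hcase :
      ((∀ l, ¬ Pab l κ) ∧ P'ab = Pab ∧
        P'ag = (fun i j => Pag i j ∧ (i, j) ≠ (τ, κ)) ∧ P'bg = Pbg) ∨
      (∃ l, Pab l κ ∧ P'ab = Pab ∧
        P'ag = (fun i j => Pag i j ∧ (i, j) ≠ (τ, κ)) ∧
        P'bg = (fun i j => Pbg i j ∧ (i, j) ≠ (τ, l)))) :
    IsGasketRel α β γ P'ab P'ag P'bg ∧ GammaIsolated γ P'ab P'ag P'bg :=
  stmt11_general α β γ Pab Pag Pbg P'ab P'ag P'bg hG hI τ κ hτκ hcase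
end

section
/- Let g : Ω → Ω be defined by g(x) = ∏_{j≥1} g₀(X_j), where (X_j) is the M-decomposition of x and g₀ is the segment bijection. If (X_j)_{j≥1} is the M-decomposition of x, then (g₀(X_j))_{j≥1} is the M'-decomposition of g(x). Consequently g is a bijection of Ω = {ωκ^∞ : ω ∈ Σ*} onto itself. -/
/-- The word `τ γ^k`. -/
def tgWord {N : ℕ} (τ γ : Fin N) (k : ℕ) : List (Fin N) :=
  τ :: List.replicate k γ

/-- The word `κ α^k κ γ`. -/
def kakWord {N : ℕ} (κ α γ : Fin N) (k : ℕ) : List (Fin N) :=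
  κ :: (List.replicate k α ++ [κ, γ])

/-- `C_M = {τγ^k : k ≥ 2} ∪ {κα^kκγ : k ≥ 0}`. -/
def CM {N : ℕ} (τ κ α γ : Fin N) : Set (List (Fin N)) :=
  {w | ∃ k, 2 ≤ k ∧ w = tgWord τ γ k} ∪ {w | ∃ k, w = kakWord κ α γ k}

/-- `C_{M'} = {κα^kκγ : k ≥ 0} ∪ {κα^kκγγ : k ≥ 0} ∪ {τγγ}`. -/
def CM' {N : ℕ} (τ κ α γ : Fin N) : Set (List (Fin N)) :=
  {w | ∃ k, w = kakWord κ α γ k} ∪ {w | ∃ k, w = kakWord κ α γ k ++ [γ]} ∪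
    {tgWord τ γ 2}

/-- The finite word `w` is a prefix of the infinite sequence `y`. -/
def PrefOf {N : ℕ} (w : List (Fin N)) (y : ℕ → Fin N) : Prop :=
  ∀ i, ∀ h : i < w.length, w.get ⟨i, h⟩ = y i

/-- The sequence `x` belongs to `Ω = {ω κ^∞ : ω ∈ Σ^*}`: it is eventually
equal to `κ`. -/
def InOmega {N : ℕ} (κ : Fin N) (x : ℕ → Fin N) : Prop :=
  ∃ n, ∀ i, n ≤ i → x i = κ

/-- `X` is the greedy decomposition of the infinite sequence `x` into
segments from `C ∪ Σ`: `x = X₀X₁X₂⋯` where each `X j` is the longest prefix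
of the remaining tail belonging to `C ∪ Σ` (single letters count as words of
length 1). -/
def IsDecompOf {N : ℕ} (C : Set (List (Fin N))) (x : ℕ → Fin N)
    (X : ℕ → List (Fin N)) : Prop :=
  ∀ j,
    PrefOf (X j) (fun i => x ((∑ t ∈ Finset.range j, (X t).length) + i)) ∧
    (X j ∈ C ∨ (X j).length = 1) ∧
    ∀ W : List (Fin N), (W ∈ C ∨ W.length = 1) →
      PrefOf W (fun i => x ((∑ t ∈ Finset.range j, (X t).length) + i)) →
      W.length ≤ (X j).length
open Classical in
/-- The segment map `g₀ : C_M ∪ Σ → C_{M'} ∪ Σ`: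
`τγ^k ↦ κα^{k-2}κγ` (`k ≥ 2`), `κα^kκγ ↦ κα^{k-1}κγγ` (`k ≥ 1`),
`κκγ ↦ τγγ`, and `i ↦ i` for single letters. -/
noncomputable def g0 {N : ℕ} (τ κ α γ : Fin N) (w : List (Fin N)) :
    List (Fin N) :=
  if ∃ k, 2 ≤ k ∧ w = tgWord τ γ k then kakWord κ α γ (w.length - 3)
  else if ∃ k, 1 ≤ k ∧ w = kakWord κ α γ k then
    kakWord κ α γ (w.length - 4) ++ [γ]
  else if w = kakWord κ α γ 0 then tgWord τ γ 2
  else w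

/-- `u` is the concatenation of the (nonempty) words `X 0, X 1, X 2, ⋯`. -/
def ConcatEq {N : ℕ} (X : ℕ → List (Fin N)) (u : ℕ → Fin N) : Prop :=
  ∀ j, PrefOf (X j) (fun i => u ((∑ t ∈ Finset.range j, (X t).length) + i))

/-!
Since `g₀` preserves lengths, the segments `g₀(X_j)` of `g(x)` start where the `X_j` do, and
one checks that `g₀(X_j)` is the greedy `M'`-segment there. The image of a segment of length
`≥ 2` begins with `κ` followed by a letter other than `γ`, or with `τγ`; so a letter `γ`, an
`α` not followed by `γ`, and a `κ` followed by `γ` in `g(x)` all come from one-letter segments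
of `x`. Hence a longer `M'`-word `κα^mκγ` or `τγγ` at a one-letter segment of `g(x)` would
already be a prefix of the corresponding tail of `x`, contradicting greediness there; and
after `τγ^k ↦ κα^{k-2}κγ` the next letter of `g(x)` is `γ` only if that of `x` is.

As `g₀` is injective and greedy decompositions are unique, `g` is injective. Every segment of
length `≥ 2` ends in `γ`, so `g` maps the finite set of sequences equal to `κ` from position `n`
on into itself, and is therefore onto.
-/

section Prefixes

variable {N : ℕ}

def shift {β : Type*} (y : ℕ → β) (n : ℕ) : ℕ → β := fun i => y (n + i)

@[simp] lemma shift_apply {β : Type*} (y : ℕ → β) (n i : ℕ) : shift y n i = y (n + i) := rfl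

@[simp] lemma shift_zero {β : Type*} (y : ℕ → β) : shift y 0 = y :=
  funext fun i => by simp

lemma shift_shift {β : Type*} (y : ℕ → β) (m n : ℕ) : shift (shift y m) n = shift y (m + n) :=
  funext fun i => by simp [Nat.add_assoc]

@[simp] lemma prefOf_nil (y : ℕ → Fin N) : PrefOf [] y := fun _ h => absurd h (Nat.not_lt_zero _)

lemma prefOf_cons {c : Fin N} {w : List (Fin N)} {y : ℕ → Fin N} :
    PrefOf (c :: w) y ↔ y 0 = c ∧ PrefOf w (shift y 1) := by
  refine ⟨fun h => ⟨(h 0 (by simp)).symm, fun i hi => ?_⟩, fun ⟨h0, h⟩ i hi => ?_⟩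
  · simpa [Nat.add_comm 1 i] using h (i + 1) (by simpa using hi)
  · cases i with
    | zero => simpa using h0.symm
    | succ i => simpa [Nat.add_comm 1 i] using h i (by simpa using hi)

lemma prefOf_append {v w : List (Fin N)} {y : ℕ → Fin N} :
    PrefOf (v ++ w) y ↔ PrefOf v y ∧ PrefOf w (shift y v.length) := by
  induction v generalizing y with
  | nil => simp
  | cons c v ih => simp [prefOf_cons, ih, shift_shift, Nat.add_comm 1, and_assoc]

lemma prefOf_append_singleton {v : List (Fin N)} {c : Fin N} {y : ℕ → Fin N} :
    PrefOf (v ++ [c]) y ↔ PrefOf v y ∧ y v.length = c := by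
  simp [prefOf_append, prefOf_cons]

lemma prefOf_replicate {n : ℕ} {c : Fin N} {y : ℕ → Fin N} :
    PrefOf (List.replicate n c) y ↔ ∀ i < n, y i = c := by
  induction n generalizing y with
  | zero => simp
  | succ n ih =>
    simp only [List.replicate_succ, prefOf_cons, ih, shift_apply]
    refine ⟨fun ⟨h0, h⟩ i hi => ?_, fun h => ⟨h 0 (by omega), fun i hi => h _ (by omega)⟩⟩
    cases i with
    | zero => exact h0
    | succ i => simpa [Nat.add_comm 1 i] using h i (by omega)

lemma PrefOf.eq_of_length_eq {w w' : List (Fin N)} {y : ℕ → Fin N} (hw : PrefOf w y)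
    (hw' : PrefOf w' y) (h : w.length = w'.length) : w = w' :=
  List.ext_getElem h fun i hi hi' => (hw i hi).trans (hw' i hi').symm

lemma PrefOf.length_lt {n : ℕ} {v : List (Fin N)} {c : Fin N} {y : ℕ → Fin N}
    (h : PrefOf (v ++ [c]) y) (hy : ∀ i, n ≤ i → y i ≠ c) : v.length < n := by
  by_contra hn
  exact hy v.length (by omega) (prefOf_append_singleton.mp h).2

end Prefixes

section Decompositions

variable {N : ℕ} {C : Set (List (Fin N))}

def IsGreedySegment (C : Set (List (Fin N))) (y : ℕ → Fin N) (w : List (Fin N)) : Prop :=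
  PrefOf w y ∧ (w ∈ C ∨ w.length = 1) ∧
    ∀ W : List (Fin N), (W ∈ C ∨ W.length = 1) → PrefOf W y → W.length ≤ w.length

namespace IsGreedySegment

variable {y : ℕ → Fin N} {w : List (Fin N)}

lemma length_le (h : IsGreedySegment C y w) {W : List (Fin N)} (hW : W ∈ C)
    (hWy : PrefOf W y) : W.length ≤ w.length :=
  h.2.2 W (Or.inl hW) hWy

lemma length_pos (h : IsGreedySegment C y w) : 0 < w.length :=
  h.2.2 [y 0] (Or.inr rfl) (prefOf_cons.mpr ⟨rfl, prefOf_nil _⟩)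

lemma of_length_le (hw : PrefOf w y) (hC : w ∈ C ∨ w.length = 1) (hpos : 0 < w.length)
    (hmax : ∀ W ∈ C, PrefOf W y → W.length ≤ w.length) : IsGreedySegment C y w := by
  refine ⟨hw, hC, fun W hW hWy => ?_⟩
  rcases hW with hW | hW
  · exact hmax W hW hWy
  · omega

lemma singleton (hmax : ∀ W ∈ C, ¬ PrefOf W y) : IsGreedySegment C y [y 0] :=
  of_length_le (prefOf_cons.mpr ⟨rfl, prefOf_nil _⟩) (Or.inr rfl) one_pos
    fun W hW hWy => absurd hWy (hmax W hW)

lemma unique {w' : List (Fin N)} (h : IsGreedySegment C y w) (h' : IsGreedySegment C y w') :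
    w = w' :=
  h.1.eq_of_length_eq h'.1 (le_antisymm (h'.2.2 w h.2.1 h.1) (h.2.2 w' h'.2.1 h'.1))

end IsGreedySegment

lemma exists_isGreedySegment_of_bdd {y : ℕ → Fin N} {B : ℕ}
    (hB : ∀ W ∈ C, PrefOf W y → W.length ≤ B) : ∃ w, IsGreedySegment C y w := by
  classical
  let P : ℕ → Prop := fun n => ∃ W, (W ∈ C ∨ W.length = 1) ∧ PrefOf W y ∧ W.length = n
  have hP1 : P 1 := ⟨[y 0], Or.inr rfl, prefOf_cons.mpr ⟨rfl, prefOf_nil _⟩, rfl⟩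
  obtain ⟨w, hC, hw, hlen⟩ : P (Nat.findGreatest P (max B 1)) :=
    Nat.findGreatest_spec (le_max_right B 1) hP1
  refine ⟨w, hw, hC, fun W hW hWy => hlen ▸ Nat.le_findGreatest ?_ ⟨W, hW, hWy, rfl⟩⟩
  rcases hW with hW | hW
  · exact (hB W hW hWy).trans (le_max_left B 1)
  · omega

def offset (X : ℕ → List (Fin N)) (j : ℕ) : ℕ := ∑ t ∈ Finset.range j, (X t).length

section offset

variable {X : ℕ → List (Fin N)}

@[simp] lemma offset_zero : offset X 0 = 0 := rfl

lemma offset_succ (j : ℕ) : offset X (j + 1) = offset X j + (X j).length :=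
  Finset.sum_range_succ _ _

lemma offset_one : offset X 1 = (X 0).length := by simp [offset_succ]

lemma offset_add (j i : ℕ) : offset X (j + i) = offset X j + offset (fun t => X (j + t)) i :=
  Finset.sum_range_add _ _ _

lemma offset_mono {i j : ℕ} (h : i ≤ j) : offset X i ≤ offset X j :=
  Finset.sum_le_sum_of_subset (Finset.range_subset_range.mpr h)

lemma offset_congr {Y : ℕ → List (Fin N)} (h : ∀ j, (X j).length = (Y j).length) (j : ℕ) :
    offset X j = offset Y j :=
  Finset.sum_congr rfl fun t _ => h t

lemma le_offset (hlen : ∀ j, 0 < (X j).length) (j : ℕ) : j ≤ offset X j := by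
  induction j with
  | zero => simp
  | succ j ih => rw [offset_succ]; have := hlen j; omega

lemma exists_offset_add (hlen : ∀ j, 0 < (X j).length) (n : ℕ) :
    ∃ j t, t < (X j).length ∧ offset X j + t = n := by
  have hex : ∃ j, n < offset X (j + 1) := ⟨n, le_offset hlen (n + 1)⟩
  have hlt := Nat.find_spec hex
  have hle : offset X (Nat.find hex) ≤ n := by
    rcases h : Nat.find hex with _ | j
    · simp
    · simpa using Nat.find_min hex (m := j) (by omega)
  rw [offset_succ] at hlt
  exact ⟨Nat.find hex, n - offset X (Nat.find hex), by omega, by omega⟩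

lemma eq_of_offset_add_eq {j j' t t' : ℕ} (ht : t < (X j).length) (ht' : t' < (X j').length)
    (h : offset X j + t = offset X j' + t') : j = j' := by
  by_contra hne
  rcases Nat.lt_or_gt_of_ne hne with hlt | hlt
  · have := offset_mono (X := X) (Nat.succ_le_of_lt hlt)
    rw [offset_succ] at this; omega
  · have := offset_mono (X := X) (Nat.succ_le_of_lt hlt)
    rw [offset_succ] at this; omega

end offset

variable {X : ℕ → List (Fin N)}

lemma concatEq_iff {u : ℕ → Fin N} :
    ConcatEq X u ↔ ∀ j, PrefOf (X j) (shift u (offset X j)) := Iff.rfl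

lemma isDecompOf_iff {x : ℕ → Fin N} :
    IsDecompOf C x X ↔ ∀ j, IsGreedySegment C (shift x (offset X j)) (X j) := Iff.rfl

namespace ConcatEq

variable {u : ℕ → Fin N}

lemma apply (hu : ConcatEq X u) {j t : ℕ} (ht : t < (X j).length) :
    u (offset X j + t) = (X j)[t] :=
  (hu j t ht).symm

lemma prefOf_head (hu : ConcatEq X u) : PrefOf (X 0) u := by
  simpa using concatEq_iff.mp hu 0

lemma unique {u' : ℕ → Fin N} (hlen : ∀ j, 0 < (X j).length) (hu : ConcatEq X u)
    (hu' : ConcatEq X u') : u = u' := by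
  funext n
  obtain ⟨j, t, ht, rfl⟩ := exists_offset_add hlen n
  rw [hu.apply ht, hu'.apply ht]

lemma shift (hu : ConcatEq X u) (j : ℕ) :
    ConcatEq (fun i => X (j + i)) (_root_.shift u (offset X j)) := by
  rw [concatEq_iff] at hu ⊢
  intro i
  rw [shift_shift, ← offset_add]
  exact hu (j + i)

end ConcatEq

lemma exists_concatEq (hlen : ∀ j, 0 < (X j).length) : ∃ u, ConcatEq X u := by
  choose j t ht hjt using exists_offset_add hlen
  refine ⟨fun n => (X (j n))[t n]'(ht n), fun i s hs => ?_⟩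
  show (X i)[s] = (X (j (offset X i + s)))[t (offset X i + s)]'(ht _)
  have hn := hjt (offset X i + s)
  generalize hn' : offset X i + s = n at hn ⊢
  have hj : j n = i := eq_of_offset_add_eq (ht n) hs (hn.trans hn'.symm)
  have hs : t n = s := by rw [hj] at hn; omega
  simp [hj, hs]

namespace IsDecompOf

variable {x : ℕ → Fin N}

lemma isGreedySegment (hX : IsDecompOf C x X) (j : ℕ) :
    IsGreedySegment C (shift x (offset X j)) (X j) :=
  hX j

lemma isGreedySegment_head (hX : IsDecompOf C x X) : IsGreedySegment C x (X 0) := by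
  simpa using hX.isGreedySegment 0

lemma length_pos (hX : IsDecompOf C x X) (j : ℕ) : 0 < (X j).length :=
  (hX.isGreedySegment j).length_pos

lemma mem (hX : IsDecompOf C x X) (j : ℕ) : X j ∈ C ∨ (X j).length = 1 :=
  (hX j).2.1

lemma concatEq (hX : IsDecompOf C x X) : ConcatEq X x := fun j => (hX j).1

lemma shift (hX : IsDecompOf C x X) (j : ℕ) :
    IsDecompOf C (_root_.shift x (offset X j)) (fun i => X (j + i)) := by
  rw [isDecompOf_iff]
  intro i
  rw [shift_shift, ← offset_add]
  exact hX.isGreedySegment (j + i)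

lemma unique {X' : ℕ → List (Fin N)} (hX : IsDecompOf C x X) (hX' : IsDecompOf C x X') :
    X = X' := by
  funext j
  induction j using Nat.strong_induction_on with
  | _ j ih =>
    have hoff : offset X j = offset X' j :=
      Finset.sum_congr rfl fun t ht => by rw [ih t (Finset.mem_range.mp ht)]
    exact (hX.isGreedySegment j).unique (hoff ▸ hX'.isGreedySegment j)

end IsDecompOf

lemma exists_isDecompOf {x : ℕ → Fin N} (h : ∀ n, ∃ w, IsGreedySegment C (shift x n) w) :
    ∃ X, IsDecompOf C x X := by
  choose seg hseg using h
  let start : ℕ → ℕ := fun j => Nat.rec 0 (fun _ p => p + (seg p).length) j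
  have hstart : ∀ j, offset (fun i => seg (start i)) j = start j := fun j => by
    induction j with
    | zero => rfl
    | succ j ih => rw [offset_succ, ih]
  refine ⟨fun j => seg (start j), isDecompOf_iff.mpr fun j => ?_⟩
  rw [hstart]
  exact hseg (start j)

end Decompositions

lemma Relator.rightTotal_of_leftUnique_of_leftTotal {β : Type*} [Finite β] {R : β → β → Prop}
    (hU : Relator.LeftUnique R) (hT : Relator.LeftTotal R) : Relator.RightTotal R := by
  choose f hf using hT
  have hinj : Function.Injective f := fun a a' h => hU (hf a) (h ▸ hf a')
  intro b
  obtain ⟨a, rfl⟩ := Finite.injective_iff_surjective.mp hinj b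
  exact ⟨a, hf a⟩

lemma finite_subtype_forall_ge_eq {N : ℕ} (κ : Fin N) (n : ℕ) :
    Finite {x : ℕ → Fin N // ∀ i, n ≤ i → x i = κ} := by
  refine Finite.of_injective (fun x (i : Fin n) => x.1 i) fun x x' h =>
    Subtype.ext (funext fun i => ?_)
  by_cases hi : i < n
  · exact congrFun h ⟨i, hi⟩
  · rw [x.2 i (by omega), x'.2 i (by omega)]

section Segments

variable {N : ℕ} {τ κ α γ : Fin N} {y : ℕ → Fin N}

@[simp] lemma tgWord_length (k : ℕ) : (tgWord τ γ k).length = k + 1 := by simp [tgWord]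

@[simp] lemma kakWord_length (k : ℕ) : (kakWord κ α γ k).length = k + 3 := by simp [kakWord]

lemma tgWord_succ (k : ℕ) : tgWord τ γ (k + 1) = tgWord τ γ k ++ [γ] := by
  simp [tgWord, List.replicate_succ']

lemma prefOf_tgWord {k : ℕ} : PrefOf (tgWord τ γ k) y ↔ y 0 = τ ∧ ∀ i < k, y (1 + i) = γ := by
  simp [tgWord, prefOf_cons, prefOf_replicate]

lemma prefOf_kakWord {k : ℕ} : PrefOf (kakWord κ α γ k) y ↔
    y 0 = κ ∧ (∀ i < k, y (1 + i) = α) ∧ y (1 + k) = κ ∧ y (1 + k + 1) = γ := by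
  simp [kakWord, prefOf_cons, prefOf_replicate, prefOf_append, Nat.add_assoc]

lemma kakWord_unique (h3 : κ ≠ α) {k m : ℕ} (hk : PrefOf (kakWord κ α γ k) y)
    (hm : PrefOf (kakWord κ α γ m) y) : k = m := by
  rw [prefOf_kakWord] at hk hm
  by_contra hne
  rcases Nat.lt_or_gt_of_ne hne with hlt | hlt
  · exact h3 (hk.2.2.1.symm.trans (hm.2.1 k hlt))
  · exact h3 (hm.2.2.1.symm.trans (hk.2.1 m hlt))

lemma head_of_prefOf_kakWord (h4 : κ ≠ γ) (h5 : α ≠ γ) {k : ℕ}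
    (hy : PrefOf (kakWord κ α γ k) y) : y 0 = κ ∧ y 1 ≠ γ := by
  rw [prefOf_kakWord] at hy
  refine ⟨hy.1, ?_⟩
  rcases k with _ | k
  · simpa [hy.2.2.1] using h4
  · simpa [hy.2.1 0 (by omega)] using h5

lemma mem_CM_or_length_eq_one_cases {w : List (Fin N)} (h : w ∈ CM τ κ α γ ∨ w.length = 1) :
    (∃ k, w = tgWord τ γ (k + 2)) ∨ (∃ k, w = kakWord κ α γ (k + 1)) ∨
      w = kakWord κ α γ 0 ∨ ∃ c, w = [c] := by
  rcases h with (⟨k, hk, rfl⟩ | ⟨_ | k, rfl⟩) | h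
  · exact Or.inl ⟨k - 2, by rw [Nat.sub_add_cancel hk]⟩
  · exact Or.inr (Or.inr (Or.inl rfl))
  · exact Or.inr (Or.inl ⟨k, rfl⟩)
  · exact Or.inr (Or.inr (Or.inr (List.length_eq_one_iff.mp h)))

lemma exists_eq_append_of_mem_CM {w : List (Fin N)} (h : w ∈ CM τ κ α γ) :
    ∃ v, w = v ++ [γ] := by
  rcases h with ⟨k, hk, rfl⟩ | ⟨k, rfl⟩
  · exact ⟨tgWord τ γ (k - 1), by rw [← tgWord_succ, Nat.sub_add_cancel (by omega)]⟩
  · exact ⟨κ :: (List.replicate k α ++ [κ]), by simp [kakWord]⟩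

lemma kakWord_ne_tgWord (h1 : τ ≠ κ) (k m : ℕ) : kakWord κ α γ k ≠ tgWord τ γ m := by
  simp [kakWord, tgWord, h1.symm]

lemma kakWord_ne_kakWord_append (h3 : κ ≠ α) (k m : ℕ) :
    kakWord κ α γ k ≠ kakWord κ α γ m ++ [γ] := by
  intro h
  obtain rfl : k = m + 1 := by simpa using congrArg List.length h
  simp [kakWord, List.replicate_succ', h3.symm] at h

lemma g0_tgWord (k : ℕ) : g0 τ κ α γ (tgWord τ γ (k + 2)) = kakWord κ α γ k := by
  rw [g0, if_pos ⟨k + 2, by omega, rfl⟩]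
  simp

lemma g0_kakWord_succ (h1 : τ ≠ κ) (k : ℕ) :
    g0 τ κ α γ (kakWord κ α γ (k + 1)) = kakWord κ α γ k ++ [γ] := by
  rw [g0, if_neg fun ⟨m, _, h⟩ => kakWord_ne_tgWord h1 _ _ h, if_pos ⟨k + 1, by omega, rfl⟩]
  simp

lemma g0_kakWord_zero (h1 : τ ≠ κ) : g0 τ κ α γ (kakWord κ α γ 0) = tgWord τ γ 2 := by
  rw [g0, if_neg fun ⟨m, _, h⟩ => kakWord_ne_tgWord h1 _ _ h,
    if_neg fun ⟨m, hm, h⟩ => by have := congrArg List.length h; simp at this; omega, if_pos rfl]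

lemma g0_singleton (c : Fin N) : g0 τ κ α γ [c] = [c] := by
  have hlen : ∀ w : List (Fin N), 2 ≤ w.length → [c] ≠ w := fun w hw h => by
    subst h; simp at hw
  rw [g0, if_neg fun ⟨m, hm, h⟩ => hlen _ (by simp; omega) h,
    if_neg fun ⟨m, _, h⟩ => hlen _ (by simp) h, if_neg (hlen _ (by simp))]

lemma length_g0 (h1 : τ ≠ κ) {w : List (Fin N)} (hw : w ∈ CM τ κ α γ ∨ w.length = 1) :
    (g0 τ κ α γ w).length = w.length := by
  rcases mem_CM_or_length_eq_one_cases hw with ⟨k, rfl⟩ | ⟨k, rfl⟩ | rfl | ⟨c, rfl⟩ <;>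
    simp [g0_tgWord, g0_kakWord_succ h1, g0_kakWord_zero h1, g0_singleton]

lemma g0_injective (h1 : τ ≠ κ) (h3 : κ ≠ α) {w w' : List (Fin N)}
    (hw : w ∈ CM τ κ α γ ∨ w.length = 1) (hw' : w' ∈ CM τ κ α γ ∨ w'.length = 1)
    (h : g0 τ κ α γ w = g0 τ κ α γ w') : w = w' := by
  rcases mem_CM_or_length_eq_one_cases hw with ⟨k, rfl⟩ | ⟨k, rfl⟩ | rfl | ⟨c, rfl⟩ <;>
  rcases mem_CM_or_length_eq_one_cases hw' with ⟨m, rfl⟩ | ⟨m, rfl⟩ | rfl | ⟨c', rfl⟩ <;>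
  simp only [g0_tgWord, g0_kakWord_succ h1, g0_kakWord_zero h1, g0_singleton] at h
  all_goals first
    | rfl
    | exact absurd h (kakWord_ne_kakWord_append h3 _ _)
    | exact absurd h.symm (kakWord_ne_kakWord_append h3 _ _)
    | (have hl := congrArg List.length h; simp at hl <;> subst_vars <;> simp_all [kakWord, tgWord])

lemma head_of_prefOf_g0 (h1 : τ ≠ κ) (h4 : κ ≠ γ) (h5 : α ≠ γ) {w : List (Fin N)}
    (hw : w ∈ CM τ κ α γ ∨ w.length = 1) (hlen : w.length ≠ 1) (hy : PrefOf (g0 τ κ α γ w) y) :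
    (y 0 = κ ∧ y 1 ≠ γ) ∨ (y 0 = τ ∧ y 1 = γ) := by
  rcases mem_CM_or_length_eq_one_cases hw with ⟨k, rfl⟩ | ⟨k, rfl⟩ | rfl | ⟨c, rfl⟩
  · rw [g0_tgWord] at hy
    exact Or.inl (head_of_prefOf_kakWord h4 h5 hy)
  · rw [g0_kakWord_succ h1] at hy
    exact Or.inl (head_of_prefOf_kakWord h4 h5 (prefOf_append_singleton.mp hy).1)
  · rw [g0_kakWord_zero h1, prefOf_tgWord] at hy
    exact Or.inr ⟨hy.1, hy.2 0 (by omega)⟩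
  · exact absurd rfl hlen

end Segments

section GreedySegments

variable {N : ℕ} {τ κ α γ : Fin N} {y : ℕ → Fin N}

lemma isGreedySegment_kakWord (h1 : τ ≠ κ) (h3 : κ ≠ α) {k : ℕ}
    (hy : PrefOf (kakWord κ α γ k) y) (hγ : y (k + 3) ≠ γ) :
    IsGreedySegment (CM' τ κ α γ) y (kakWord κ α γ k) := by
  refine .of_length_le hy (Or.inl (Or.inl (Or.inl ⟨k, rfl⟩))) (by simp) fun W hW hWy => ?_
  rcases hW with (⟨m, rfl⟩ | ⟨m, rfl⟩) | rfl
  · rw [kakWord_unique h3 hWy hy]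
  · obtain ⟨hm, hmγ⟩ := prefOf_append_singleton.mp hWy
    obtain rfl := kakWord_unique h3 hm hy
    exact absurd (by simpa using hmγ) hγ
  · exact absurd ((prefOf_tgWord.mp hWy).1.symm.trans (prefOf_kakWord.mp hy).1) h1

lemma isGreedySegment_kakWord_append (h1 : τ ≠ κ) (h3 : κ ≠ α) {k : ℕ}
    (hy : PrefOf (kakWord κ α γ k ++ [γ]) y) :
    IsGreedySegment (CM' τ κ α γ) y (kakWord κ α γ k ++ [γ]) := by
  have hk := (prefOf_append_singleton.mp hy).1
  refine .of_length_le hy (Or.inl (Or.inl (Or.inr ⟨k, rfl⟩))) (by simp) fun W hW hWy => ?_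
  rcases hW with (⟨m, rfl⟩ | ⟨m, rfl⟩) | rfl
  · simp [kakWord_unique h3 hWy hk]
  · simp [kakWord_unique h3 (prefOf_append_singleton.mp hWy).1 hk]
  · exact absurd ((prefOf_tgWord.mp hWy).1.symm.trans (prefOf_kakWord.mp hk).1) h1

lemma isGreedySegment_tgWord_two (h1 : τ ≠ κ) (hy : PrefOf (tgWord τ γ 2) y) :
    IsGreedySegment (CM' τ κ α γ) y (tgWord τ γ 2) := by
  refine .of_length_le hy (Or.inl (Or.inr rfl)) (by simp) fun W hW hWy => ?_
  have hτ := (prefOf_tgWord.mp hy).1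
  rcases hW with (⟨m, rfl⟩ | ⟨m, rfl⟩) | rfl
  · exact absurd (hτ.symm.trans (prefOf_kakWord.mp hWy).1) h1
  · exact absurd (hτ.symm.trans (prefOf_kakWord.mp (prefOf_append_singleton.mp hWy).1).1) h1
  · rfl

lemma exists_isDecompOf_CM (h4 : κ ≠ γ) {x : ℕ → Fin N} (hx : InOmega κ x) :
    ∃ X, IsDecompOf (CM τ κ α γ) x X := by
  obtain ⟨n, hn⟩ := hx
  refine exists_isDecompOf fun m => exists_isGreedySegment_of_bdd (B := n) fun W hW hWy => ?_
  obtain ⟨v, rfl⟩ := exists_eq_append_of_mem_CM hW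
  have := hWy.length_lt (n := n) fun i hi => by simpa [hn (m + i) (by omega)] using h4
  simp; omega

end GreedySegments

section Transfer

variable {N : ℕ} {τ κ α γ : Fin N} {x u : ℕ → Fin N} {X : ℕ → List (Fin N)}

lemma offset_g0 (h1 : τ ≠ κ) (hX : IsDecompOf (CM τ κ α γ) x X) (j : ℕ) :
    offset (fun j => g0 τ κ α γ (X j)) j = offset X j :=
  offset_congr (fun j => length_g0 h1 (hX.mem j)) j

lemma length_g0_pos (h1 : τ ≠ κ) (hX : IsDecompOf (CM τ κ α γ) x X) (j : ℕ) :
    0 < (g0 τ κ α γ (X j)).length := by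
  rw [length_g0 h1 (hX.mem j)]
  exact hX.length_pos j

lemma IsDecompOf.head_eq_singleton (h1 : τ ≠ κ) (h4 : κ ≠ γ) (h5 : α ≠ γ)
    (hX : IsDecompOf (CM τ κ α γ) x X) (hu : ConcatEq (fun j => g0 τ κ α γ (X j)) u)
    (h : ¬ ((u 0 = κ ∧ u 1 ≠ γ) ∨ (u 0 = τ ∧ u 1 = γ))) : X 0 = [u 0] := by
  by_cases hlen : (X 0).length = 1
  · obtain ⟨c, hc⟩ := List.length_eq_one_iff.mp hlen
    have := hu.prefOf_head
    simp only [hc, g0_singleton, prefOf_cons] at this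
    rw [hc, this.1]
  · exact absurd (head_of_prefOf_g0 h1 h4 h5 (hX.mem 0) hlen hu.prefOf_head) h

def PrefixTransfers (τ κ α γ : Fin N) (v : List (Fin N)) : Prop :=
  ∀ (x : ℕ → Fin N) (X : ℕ → List (Fin N)) (u : ℕ → Fin N), IsDecompOf (CM τ κ α γ) x X →
    ConcatEq (fun j => g0 τ κ α γ (X j)) u → PrefOf v u → PrefOf v x

lemma prefOf_cons_of_head_eq_singleton (h1 : τ ≠ κ) {c : Fin N} {v : List (Fin N)}
    (hX : IsDecompOf (CM τ κ α γ) x X) (hu : ConcatEq (fun j => g0 τ κ α γ (X j)) u)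
    (h0 : X 0 = [c]) (hv : PrefixTransfers τ κ α γ v) (h : PrefOf (c :: v) u) :
    PrefOf (c :: v) x := by
  have hx0 : x 0 = c := by simpa [h0, prefOf_cons] using hX.concatEq.prefOf_head
  have hoff : offset X 1 = 1 := by simp [offset_one, h0]
  have hv' := hv _ _ _ (hX.shift 1) (hu.shift 1)
  rw [offset_g0 h1 hX, hoff] at hv'
  exact prefOf_cons.mpr ⟨hx0, hv' (prefOf_cons.mp h).2⟩

lemma PrefixTransfers.cons (h1 : τ ≠ κ) {c : Fin N} {v : List (Fin N)}
    (hv : PrefixTransfers τ κ α γ v)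
    (hc : ∀ (x : ℕ → Fin N) (X : ℕ → List (Fin N)) (u : ℕ → Fin N),
      IsDecompOf (CM τ κ α γ) x X → ConcatEq (fun j => g0 τ κ α γ (X j)) u →
      PrefOf (c :: v) u → X 0 = [c]) :
    PrefixTransfers τ κ α γ (c :: v) := fun x X u hX hu h =>
  prefOf_cons_of_head_eq_singleton h1 hX hu (hc x X u hX hu h) hv h

variable (h1 : τ ≠ κ) (h2 : τ ≠ γ) (h3 : κ ≠ α) (h4 : κ ≠ γ) (h5 : α ≠ γ)
include h1 h2 h4 h5

lemma prefixTransfers_replicate (n : ℕ) : PrefixTransfers τ κ α γ (List.replicate n γ) := by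
  induction n with
  | zero => exact fun _ _ _ _ _ _ => prefOf_nil _
  | succ n ih =>
    refine ih.cons h1 fun x X u hX hu h => ?_
    have hu0 : u 0 = γ := (prefOf_cons.mp h).1
    rw [← hu0]
    exact hX.head_eq_singleton h1 h4 h5 hu (by simp [hu0, h4.symm, h2.symm])

include h3

lemma prefixTransfers_alpha (m : ℕ) :
    PrefixTransfers τ κ α γ (List.replicate m α ++ [κ, γ]) := by
  induction m with
  | zero =>
    refine (prefixTransfers_replicate h1 h2 h4 h5 1).cons h1 fun x X u hX hu h => ?_
    simp only [List.replicate_one, prefOf_cons, shift_apply] at h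
    rw [← h.1]
    exact hX.head_eq_singleton h1 h4 h5 hu (by simp [h.1, h.2.1, h1.symm])
  | succ m ih =>
    rw [List.replicate_succ, List.cons_append]
    refine ih.cons h1 fun x X u hX hu h => ?_
    have hu1 : u 1 ≠ γ := by
      rcases m with _ | m <;> simp [prefOf_cons, prefOf_append, prefOf_replicate] at h
      · simpa [h.2.1] using h4
      · simpa [h.2.1 0 (by omega)] using h5
    rw [← (prefOf_cons.mp h).1]
    exact hX.head_eq_singleton h1 h4 h5 hu (by simp [(prefOf_cons.mp h).1, hu1, h3.symm])

lemma isGreedySegment_g0_head (hX : IsDecompOf (CM τ κ α γ) x X)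
    (hu : ConcatEq (fun j => g0 τ κ α γ (X j)) u) :
    IsGreedySegment (CM' τ κ α γ) u (g0 τ κ α γ (X 0)) := by
  have hx0 := hX.isGreedySegment_head
  have hu0 := hu.prefOf_head
  rcases mem_CM_or_length_eq_one_cases (hX.mem 0) with ⟨k, hk⟩ | ⟨k, hk⟩ | hk | ⟨c, hk⟩ <;>
    rw [hk] at hx0 hu0 ⊢
  · rw [g0_tgWord] at hu0 ⊢
    refine isGreedySegment_kakWord h1 h3 hu0 fun hγ => ?_
    -- a `γ` right after `κα^kκγ` in `u` forces `X 1 = [γ]`, which would extend `τγ^(k+2)` in `x`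
    have hoff : offset X 1 = k + 3 := by simp [offset_one, hk]
    have hX1 := (hX.shift 1).head_eq_singleton h1 h4 h5 (hu.shift 1)
    simp only [offset_g0 h1 hX, hoff, shift_apply, Nat.add_zero, hγ] at hX1
    have hx3 : x (k + 3) = γ := by
      simpa [hoff, hX1 (by simp [h4.symm, h2.symm])] using hX.concatEq.apply (j := 1) (t := 0)
    have hext : PrefOf (tgWord τ γ (k + 3)) x := by
      rw [tgWord_succ]
      exact prefOf_append_singleton.mpr ⟨hx0.1, by simpa using hx3⟩
    have hlong := hx0.length_le (Or.inl ⟨k + 3, by omega, rfl⟩) hext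
    simp at hlong
  · rw [g0_kakWord_succ h1] at hu0 ⊢
    exact isGreedySegment_kakWord_append h1 h3 hu0
  · rw [g0_kakWord_zero h1] at hu0 ⊢
    exact isGreedySegment_tgWord_two h1 hu0
  · rw [g0_singleton] at hu0 ⊢
    obtain rfl : u 0 = c := by simpa [prefOf_cons] using hu0
    have hlift : ∀ v, PrefixTransfers τ κ α γ v → u 0 :: v ∈ CM τ κ α γ → v ≠ [] →
        ¬ PrefOf (u 0 :: v) u := fun v hv hC hv0 h => by
      have := hx0.length_le hC (prefOf_cons_of_head_eq_singleton h1 hX hu hk hv h)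
      exact hv0 (by simpa using this)
    have hkak : ∀ m, ¬ PrefOf (kakWord κ α γ m) u := fun m h => by
      have hκ : u 0 = κ := (prefOf_kakWord.mp h).1
      exact hlift _ (prefixTransfers_alpha h1 h2 h3 h4 h5 m) (by rw [hκ]; exact Or.inr ⟨m, rfl⟩)
        (by simp) (by rw [hκ]; exact h)
    refine IsGreedySegment.singleton fun W hW hWu => ?_
    rcases hW with (⟨m, rfl⟩ | ⟨m, rfl⟩) | rfl
    · exact hkak m hWu
    · exact hkak m (prefOf_append_singleton.mp hWu).1
    · have hτ : u 0 = τ := (prefOf_tgWord.mp hWu).1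
      exact hlift _ (prefixTransfers_replicate h1 h2 h4 h5 2)
        (by rw [hτ]; exact Or.inl ⟨2, le_rfl, rfl⟩) (by simp) (by rw [hτ]; exact hWu)

lemma IsDecompOf.map_g0 (hX : IsDecompOf (CM τ κ α γ) x X)
    (hu : ConcatEq (fun j => g0 τ κ α γ (X j)) u) :
    IsDecompOf (CM' τ κ α γ) u (fun j => g0 τ κ α γ (X j)) := by
  rw [isDecompOf_iff]
  intro j
  simpa using isGreedySegment_g0_head h1 h2 h3 h4 h5 (hX.shift j) (hu.shift j)

end Transfer

section Bijection

variable {N : ℕ} {τ κ α γ : Fin N} {x u : ℕ → Fin N} {X : ℕ → List (Fin N)}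

def IsGImage (τ κ α γ : Fin N) (x u : ℕ → Fin N) : Prop :=
  ∃ X, IsDecompOf (CM τ κ α γ) x X ∧ ConcatEq (fun j => g0 τ κ α γ (X j)) u

lemma isGImage_leftUnique (h1 : τ ≠ κ) (h2 : τ ≠ γ) (h3 : κ ≠ α) (h4 : κ ≠ γ) (h5 : α ≠ γ) :
    Relator.LeftUnique (IsGImage τ κ α γ) := by
  rintro x x' u ⟨X, hX, hu⟩ ⟨X', hX', hu'⟩
  have hY := (hX.map_g0 h1 h2 h3 h4 h5 hu).unique (hX'.map_g0 h1 h2 h3 h4 h5 hu')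
  obtain rfl : X = X' :=
    funext fun j => g0_injective h1 h3 (hX.mem j) (hX'.mem j) (congrFun hY j)
  exact hX.concatEq.unique hX.length_pos hX'.concatEq

lemma concatEq_g0_eq_of_le (h1 : τ ≠ κ) (h4 : κ ≠ γ) (hX : IsDecompOf (CM τ κ α γ) x X)
    (hu : ConcatEq (fun j => g0 τ κ α γ (X j)) u) {n : ℕ} (hx : ∀ i, n ≤ i → x i = κ) :
    ∀ i, n ≤ i → u i = κ := by
  intro i hi
  obtain ⟨j, t, ht, rfl⟩ := exists_offset_add (length_g0_pos h1 hX) i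
  rw [hu.apply ht]
  rw [offset_g0 h1 hX] at hi
  rw [length_g0 h1 (hX.mem j)] at ht
  rcases hX.mem j with hC | hlen
  · obtain ⟨v, hv⟩ := exists_eq_append_of_mem_CM hC
    have hγ := hX.concatEq.apply (j := j) (t := v.length) (by simp [hv])
    simp only [hv, List.getElem_concat_length] at hγ ht
    exact absurd (hγ.symm.trans (hx _ (by simp at ht; omega))) h4.symm
  · obtain ⟨c, hc⟩ := List.length_eq_one_iff.mp hlen
    obtain rfl : t = 0 := by omega
    have hxc := hX.concatEq.apply (j := j) (t := 0) (by simp [hc])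
    simp only [hc, g0_singleton, List.getElem_singleton] at hxc ⊢
    exact hxc ▸ hx _ hi

lemma exists_isGImage (h1 : τ ≠ κ) (h4 : κ ≠ γ) (hx : InOmega κ x) :
    ∃ u, IsGImage τ κ α γ x u := by
  obtain ⟨X, hX⟩ := exists_isDecompOf_CM h4 hx
  obtain ⟨u, hu⟩ := exists_concatEq (length_g0_pos h1 hX)
  exact ⟨u, X, hX, hu⟩

lemma exists_isGImage_of_forall_ge (h1 : τ ≠ κ) (h2 : τ ≠ γ) (h3 : κ ≠ α) (h4 : κ ≠ γ)
    (h5 : α ≠ γ) {n : ℕ} (hu : ∀ i, n ≤ i → u i = κ) :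
    ∃ x, (∀ i, n ≤ i → x i = κ) ∧ IsGImage τ κ α γ x u := by
  have := finite_subtype_forall_ge_eq κ n
  let R (x u : {x : ℕ → Fin N // ∀ i, n ≤ i → x i = κ}) : Prop := IsGImage τ κ α γ x.1 u.1
  have hT : Relator.LeftTotal R := fun x => by
    obtain ⟨u, X, hX, hu⟩ := exists_isGImage h1 h4 (α := α) ⟨n, x.2⟩
    exact ⟨⟨u, concatEq_g0_eq_of_le h1 h4 hX hu x.2⟩, X, hX, hu⟩
  have hU : Relator.LeftUnique R := fun _ _ _ hx hx' =>
    Subtype.ext (isGImage_leftUnique h1 h2 h3 h4 h5 hx hx')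
  obtain ⟨x, hx⟩ := Relator.rightTotal_of_leftUnique_of_leftTotal hU hT ⟨u, hu⟩
  exact ⟨x.1, x.2, hx⟩

end Bijection

theorem stmt15_general {N : ℕ} (τ κ α γ : Fin N)
    (h1 : τ ≠ κ) (h2 : τ ≠ γ) (h3 : κ ≠ α) (h4 : κ ≠ γ) (h5 : α ≠ γ) :
    -- the image decomposition is the M'-decomposition
    (∀ x : ℕ → Fin N, ∀ X : ℕ → List (Fin N), ∀ u : ℕ → Fin N,
      InOmega κ x → IsDecompOf (CM τ κ α γ) x X →
      ConcatEq (fun j => g0 τ κ α γ (X j)) u →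
      InOmega κ u ∧ IsDecompOf (CM' τ κ α γ) u (fun j => g0 τ κ α γ (X j))) ∧
    -- g is well defined on Ω
    (∀ x : ℕ → Fin N, InOmega κ x →
      ∃! u : ℕ → Fin N, ∃ X : ℕ → List (Fin N),
        IsDecompOf (CM τ κ α γ) x X ∧ ConcatEq (fun j => g0 τ κ α γ (X j)) u) ∧
    -- g is a bijection of Ω onto Ω
    (∀ u : ℕ → Fin N, InOmega κ u →
      ∃! x : ℕ → Fin N, InOmega κ x ∧
        ∃ X : ℕ → List (Fin N),
          IsDecompOf (CM τ κ α γ) x X ∧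
          ConcatEq (fun j => g0 τ κ α γ (X j)) u) := by
  refine ⟨fun x X u ⟨n, hn⟩ hX hu => ?_, fun x hx => ?_, fun u ⟨n, hn⟩ => ?_⟩
  · exact ⟨⟨n, concatEq_g0_eq_of_le h1 h4 hX hu hn⟩, hX.map_g0 h1 h2 h3 h4 h5 hu⟩
  · obtain ⟨u, X, hX, hu⟩ := exists_isGImage h1 h4 hx
    refine ⟨u, ⟨X, hX, hu⟩, fun u' ⟨X', hX', hu'⟩ => ?_⟩
    obtain rfl := hX'.unique hX
    exact hu'.unique (length_g0_pos h1 hX') hu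
  · obtain ⟨x, hxn, hxu⟩ := exists_isGImage_of_forall_ge h1 h2 h3 h4 h5 hn
    exact ⟨x, ⟨⟨n, hxn⟩, hxu⟩, fun x' ⟨_, hx'u⟩ => isGImage_leftUnique h1 h2 h3 h4 h5 hx'u hxu⟩

/-- if `(X j)` is the M-decomposition of `x ∈ Ω`, then
`(g₀ (X j))` is the M'-decomposition of `g(x) = ∏ g₀(X j)`; consequently the
induced map `g` is a bijection of `Ω` onto itself. -/
theorem stmt15 {N : ℕ} (hN : 4 ≤ N) (τ κ α γ : Fin N)
    (h1 : τ ≠ κ) (h2 : τ ≠ γ) (h3 : κ ≠ α) (h4 : κ ≠ γ) (h5 : α ≠ γ) :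
    -- the image decomposition is the M'-decomposition
    (∀ x : ℕ → Fin N, ∀ X : ℕ → List (Fin N), ∀ u : ℕ → Fin N,
      InOmega κ x → IsDecompOf (CM τ κ α γ) x X →
      ConcatEq (fun j => g0 τ κ α γ (X j)) u →
      InOmega κ u ∧ IsDecompOf (CM' τ κ α γ) u (fun j => g0 τ κ α γ (X j))) ∧
    -- g is well defined on Ω
    (∀ x : ℕ → Fin N, InOmega κ x →
      ∃! u : ℕ → Fin N, ∃ X : ℕ → List (Fin N),
        IsDecompOf (CM τ κ α γ) x X ∧ ConcatEq (fun j => g0 τ κ α γ (X j)) u) ∧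
    -- g is a bijection of Ω onto Ω
    (∀ u : ℕ → Fin N, InOmega κ u →
      ∃! x : ℕ → Fin N, InOmega κ x ∧
        ∃ X : ℕ → List (Fin N),
          IsDecompOf (CM τ κ α γ) x X ∧
          ConcatEq (fun j => g0 τ κ α γ (X j)) u) :=
  stmt15_general τ κ α γ h1 h2 h3 h4 h5
end

section
/- No word in {κα, κκ, τγ} occurs inside any element of C_M ∪ C_{M'} except as a prefix: if W ∈ C_M ∪ C_{M'} and w ∈ {κα, κκ, τγ} occurs as a factor of W starting at position p, then p = 1. -/
theorem repApp {N k q : ℕ} (a : Fin N) (r : List (Fin N)) :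
    (List.replicate k a ++ r)[q]? = if q < k then some a else r[q - k]? := by
  rw [List.getElem?_append]
  simp [List.getElem?_replicate]
  split_ifs <;> simp_all

theorem kakAux {N : ℕ} (τ κ α γ : Fin N)
    (h1 : τ ≠ κ) (h2 : τ ≠ γ) (h3 : κ ≠ α) (h4 : κ ≠ γ) (h5 : α ≠ γ)
    (a b : Fin N) (hab : (a = κ ∧ b = α) ∨ (a = κ ∧ b = κ) ∨ (a = τ ∧ b = γ))
    (k q : ℕ) (r : List (Fin N)) (hr : r = [κ, γ] ∨ r = [κ, γ, γ])
    (h0 : (List.replicate k α ++ r)[q]? = some a)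
    (hb : (List.replicate k α ++ r)[q + 1]? = some b) : False := by
  rw [repApp] at h0 hb
  rcases lt_or_ge q k with h | h
  · rw [if_pos h] at h0
    rcases lt_or_ge (q + 1) k with h' | h'
    · rw [if_pos h'] at hb
      rcases hab with ⟨rfl, rfl⟩ | ⟨rfl, rfl⟩ | ⟨rfl, rfl⟩ <;> simp_all
    · rw [if_neg (by omega)] at hb
      have hq : q + 1 - k = 0 := by omega
      rw [hq] at hb
      rcases hr with rfl | rfl <;>
        rcases hab with ⟨rfl, rfl⟩ | ⟨rfl, rfl⟩ | ⟨rfl, rfl⟩ <;> simp_all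
  · rw [if_neg (by omega)] at h0
    rw [if_neg (by omega)] at hb
    have hq : q + 1 - k = (q - k) + 1 := by omega
    rw [hq] at hb
    obtain ⟨j, hj⟩ : ∃ j, q - k = j := ⟨_, rfl⟩
    rw [hj] at h0 hb
    rcases hr with rfl | rfl <;>
      rcases j with _ | _ | _ | j <;>
      rcases hab with ⟨rfl, rfl⟩ | ⟨rfl, rfl⟩ | ⟨rfl, rfl⟩ <;> simp_all

theorem tgAux {N : ℕ} (τ κ γ : Fin N) (h2 : τ ≠ γ) (h4 : κ ≠ γ)
    (a : Fin N) (ha : a = κ ∨ a = τ) (k q : ℕ)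
    (h0 : (List.replicate k γ)[q]? = some a) : False := by
  rw [List.getElem?_replicate] at h0
  split_ifs at h0
  rcases ha with rfl | rfl <;> simp_all


/-- the words `κα`, `κκ`, `τγ` occur in elements of
`C_M ∪ C_{M'}` only as prefixes: any occurrence starts at position 0. -/
theorem stmt17 {N : ℕ} (hN : 4 ≤ N) (τ κ α γ : Fin N)
    (h1 : τ ≠ κ) (h2 : τ ≠ γ) (h3 : κ ≠ α) (h4 : κ ≠ γ) (h5 : α ≠ γ)
    (W w : List (Fin N))
    (hW : W ∈ CM τ κ α γ ∪ CM' τ κ α γ)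
    (hw : w = [κ, α] ∨ w = [κ, κ] ∨ w = [τ, γ])
    (p : ℕ) (hocc : w <+: W.drop p) :
    p = 0 := by
  by_contra hp
  obtain ⟨q, rfl⟩ : ∃ q, p = q + 1 := ⟨p - 1, by omega⟩
  obtain ⟨t, ht⟩ := hocc
  obtain ⟨a, b, rfl, hab⟩ : ∃ a b, w = [a, b] ∧
      ((a = κ ∧ b = α) ∨ (a = κ ∧ b = κ) ∨ (a = τ ∧ b = γ)) := by
    rcases hw with rfl | rfl | rfl
    · exact ⟨κ, α, rfl, Or.inl ⟨rfl, rfl⟩⟩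
    · exact ⟨κ, κ, rfl, Or.inr (Or.inl ⟨rfl, rfl⟩)⟩
    · exact ⟨τ, γ, rfl, Or.inr (Or.inr ⟨rfl, rfl⟩)⟩
  have h0 : W[q + 1]? = some a := by
    have h' : (W.drop (q + 1))[0]? = some a := by rw [← ht]; simp
    rwa [List.getElem?_drop] at h'
  have hb : W[q + 2]? = some b := by
    have h' : (W.drop (q + 1))[1]? = some b := by rw [← ht]; simp
    rwa [List.getElem?_drop] at h'
  have ha : a = κ ∨ a = τ := by tauto
  rcases hW with (⟨k, hk, rfl⟩ | ⟨k, rfl⟩) | ((⟨k, rfl⟩ | ⟨k, rfl⟩) | rfl)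
  · simp only [tgWord, List.getElem?_cons_succ] at h0
    exact tgAux τ κ γ h2 h4 a ha k q h0
  · simp only [kakWord, List.getElem?_cons_succ] at h0 hb
    exact kakAux τ κ α γ h1 h2 h3 h4 h5 a b hab k q _ (Or.inl rfl) h0 hb
  · simp only [kakWord, List.getElem?_cons_succ] at h0 hb
    exact kakAux τ κ α γ h1 h2 h3 h4 h5 a b hab k q _ (Or.inl rfl) h0 hb
  · have hrw : kakWord κ α γ k ++ [γ] = κ :: (List.replicate k α ++ [κ, γ, γ]) := by
      simp [kakWord]
    rw [hrw] at h0 hb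
    simp only [List.getElem?_cons_succ] at h0 hb
    exact kakAux τ κ α γ h1 h2 h3 h4 h5 a b hab k q _ (Or.inr rfl) h0 hb
  · simp only [tgWord, List.getElem?_cons_succ] at h0
    exact tgAux τ κ γ h2 h4 a ha 2 q h0
end

section
/- Let K ⊆ ℝ² be the attractor of an IFS {φ_j(z) = r_j(z + d_j)}_{j=1}^N forming a fractal gasket: each φ_j(Δ) ⊆ Δ for the regular triangle Δ with vertices (0,0), (1,0), (1/2, √3/2), and distinct φ_i(Δ), φ_j(Δ) intersect at most at their vertices. Then K satisfies the sharp separation condition: there exists C' > 0 such that for all k ≥ 1 and words I, J ∈ Σ^k, if φ_I(K) ∩ φ_J(K) = ∅ then dist(φ_I(K), φ_J(K)) ≥ C'·min{diam φ_I(K), diam φ_J(K)}. -/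
/-!
Every vertex of Δ is an exposed point of Δ, so a contracting homothety mapping Δ into itself
fixes each vertex lying in its piece; and two distinct maps never send a vertex to the same
point, since the smaller piece would then sit inside the larger one, hence inside a finite set.

Given disjoint cylinders `φ_I(K)`, `φ_J(K)` of the same length, strip their common prefix, which
rescales distances and diameters alike. If the first letters `i ≠ j` differ, either `φ_i(Δ)` and
`φ_j(Δ)` are disjoint, hence at distance at least some `c > 0`, or they meet at one point
`v = φ_i(u₁) = φ_j(u₂)` with `u₁ ≠ u₂` vertices. Near distinct vertices Δ lies in cones meeting
at an angle of at least 60°, which gives `|a - v| ≤ 2 |a - b|` for `a`, `b` in the two pieces.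
As `v` misses one of the two cylinders, it remains to see that a cylinder `φ_W(K)` missing a
vertex `u` stays at distance `≳ diam φ_W(K)` from it. This goes by induction on `W`: either the
first map of `W` fixes `u` and everything rescales, or `u` lies outside its piece, at distance
at least `c`.
-/

/-- Composition of the maps of an IFS along a word:
`φ_{i₁…i_k} = φ_{i₁} ∘ ⋯ ∘ φ_{i_k}`. -/
def phiWord {N : ℕ} {E : Type*} (φ : Fin N → E → E) : List (Fin N) → E → E
  | [] => id
  | i :: I => φ i ∘ phiWord φ I

open Metric Set Filter Topology Pointwise RealInnerProductSpace

local notation "ℝ²" => EuclideanSpace ℝ (Fin 2)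

section MetricFacts

variable {X : Type*} [MetricSpace X]

theorem eventually_le_dist_of_disjoint {A B : Set X} (hA : IsCompact A) (hB : IsClosed B) :
    ∀ᶠ c in 𝓝[>] (0 : ℝ), Disjoint A B → ∀ a ∈ A, ∀ b ∈ B, c ≤ dist a b := by
  by_cases hAB : Disjoint A B
  · obtain ⟨δ, hδ, hδAB⟩ := exists_pos_forall_lt_edist hA hB hAB
    filter_upwards [Ioc_mem_nhdsGT (show (0 : ℝ) < δ from hδ)] with c hc _ a ha b hb
    have hlt := hδAB a ha b hb
    rw [edist_nndist, ENNReal.coe_lt_coe, ← NNReal.coe_lt_coe, coe_nndist] at hlt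
    exact hc.2.trans hlt.le
  · exact Eventually.of_forall fun _ h => absurd h hAB

theorem exists_pos_separation {ι : Type*} [Finite ι] {f : ι → X → X} {Δ V K : Set X}
    (hf : ∀ j, Continuous (f j)) (hΔ : IsCompact Δ) (hV : V.Finite) (hK : IsCompact K) :
    ∃ c > 0, (∀ u ∈ V, u ∉ K → ∀ a ∈ K, c ≤ dist a u) ∧
      (∀ u ∈ V, ∀ j, u ∉ f j '' Δ → ∀ a ∈ f j '' Δ, c ≤ dist a u) ∧
      (∀ i j, f i '' Δ ∩ f j '' Δ = ∅ → ∀ a ∈ f i '' Δ, ∀ b ∈ f j '' Δ, c ≤ dist a b) := by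
  have hpiece : ∀ j, IsCompact (f j '' Δ) := fun j => hΔ.image (hf j)
  have hK' := hV.eventually_all.2 fun u (_ : u ∈ V) =>
    eventually_le_dist_of_disjoint hK (isClosed_singleton (x := u))
  have hpiece' := hV.eventually_all.2 fun u (_ : u ∈ V) => eventually_all.2 fun j =>
    eventually_le_dist_of_disjoint (hpiece j) (isClosed_singleton (x := u))
  have hdisj := eventually_all.2 fun i => eventually_all.2 fun j =>
    eventually_le_dist_of_disjoint (hpiece i) (hpiece j).isClosed
  obtain ⟨c, ⟨hcK, hcPiece, hcDisj⟩, hc⟩ :=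
    ((hK'.and (hpiece'.and hdisj)).and self_mem_nhdsWithin).exists
  exact ⟨c, hc, fun u hu huK a ha => hcK u hu (disjoint_singleton_right.2 huK) a ha u rfl,
    fun u hu j huj a ha => hcPiece u hu j (disjoint_singleton_right.2 huj) a ha u rfl,
    fun i j hij => hcDisj i j (disjoint_iff_inter_eq_empty.2 hij)⟩

theorem subset_of_eq_iUnion_image {ι : Type*} {f : ι → X → X} {q : ι → ℝ} {K S : Set X}
    (hq : ∀ j, 0 ≤ q j ∧ q j < 1) (hf : ∀ j a b, dist (f j a) (f j b) ≤ q j * dist a b)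
    (hfS : ∀ j, MapsTo (f j) S S) (hS : IsCompact S) (hSne : S.Nonempty)
    (hK : IsCompact K) (hKne : K.Nonempty) (hKeq : K = ⋃ j, f j '' K) : K ⊆ S := by
  obtain ⟨x₀, hx₀, hmax⟩ := hK.exists_isMaxOn hKne (continuous_infDist_pt S).continuousOn
  have hcontract : ∀ j y, infDist (f j y) S ≤ q j * infDist y S := by
    intro j y
    obtain ⟨z, hz, hyz⟩ := hS.exists_infDist_eq_dist hSne y
    calc infDist (f j y) S ≤ dist (f j y) (f j z) := infDist_le_dist_of_mem (hfS j hz)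
      _ ≤ q j * infDist y S := hyz ▸ hf j y z
  have hx₀S : infDist x₀ S ≤ 0 := by
    rw [hKeq] at hx₀
    obtain ⟨j, y, hy, rfl⟩ := mem_iUnion.1 hx₀
    have hy' : infDist y S ≤ infDist (f j y) S := hmax hy
    nlinarith [hcontract j y, hq j, infDist_nonneg (x := y) (s := S)]
  intro x hx
  exact (hS.isClosed.mem_iff_infDist_zero hSne).2
    (le_antisymm ((hmax hx).trans hx₀S) infDist_nonneg)

end MetricFacts

theorem norm_le_two_mul_norm_sub_of_inner_le_half {F : Type*} [NormedAddCommGroup F]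
    [InnerProductSpace ℝ F] {p q : F} (h : ⟪p, q⟫ ≤ 1 / 2 * (‖p‖ * ‖q‖)) :
    ‖p‖ ≤ 2 * ‖p - q‖ := by
  have hsq : ‖p‖ ^ 2 ≤ (2 * ‖p - q‖) ^ 2 := by
    rw [mul_pow, norm_sub_sq_real]
    nlinarith [sq_nonneg (‖q‖ - ‖p‖ / 2)]
  exact le_of_sq_le_sq hsq (by positivity)

section Homothety

variable {E : Type*} [NormedAddCommGroup E] [NormedSpace ℝ E] {f : E → E} {c : ℝ} {v : E}

theorem homothety_sub (hf : ∀ z, f z = c • (z + v)) (a b : E) : f a - f b = c • (a - b) := by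
  rw [hf, hf, ← smul_sub, add_sub_add_right_eq_sub]

theorem dist_homothety (hf : ∀ z, f z = c • (z + v)) (hc : 0 ≤ c) (a b : E) :
    dist (f a) (f b) = c * dist a b := by
  rw [dist_eq_norm, dist_eq_norm, homothety_sub hf, norm_smul, Real.norm_of_nonneg hc]

theorem diam_image_homothety (hf : ∀ z, f z = c • (z + v)) (hc : 0 ≤ c) (S : Set E) :
    diam (f '' S) = c * diam S := by
  have hfS : f '' S = c • ((· + v) '' S) := by
    rw [← image_smul, image_image]; exact image_congr fun z _ => hf z
  rw [hfS, diam_smul₀, (isometry_add_right v).diam_image, Real.norm_of_nonneg hc]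

theorem homothety_injective (hf : ∀ z, f z = c • (z + v)) (hc : c ≠ 0) : Function.Injective f :=
  fun a b hab => by
    have := homothety_sub hf a b
    rwa [hab, sub_self, eq_comm, smul_eq_zero_iff_right hc, sub_eq_zero] at this

theorem homothety_continuous (hf : ∀ z, f z = c • (z + v)) : Continuous f := by
  rw [funext hf]; fun_prop

theorem image_subset_image_of_homothety_apply_eq {g : E → E} {c' : ℝ} {v' : E} {S : Set E} {u : E}
    (hf : ∀ z, f z = c • (z + v)) (hg : ∀ z, g z = c' • (z + v')) (hc : 0 < c) (hcc' : c ≤ c')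
    (hS : Convex ℝ S) (hu : u ∈ S) (hfg : f u = g u) : f '' S ⊆ g '' S := by
  rintro _ ⟨x, hx, rfl⟩
  have hc' : 0 < c' := hc.trans_le hcc'
  refine ⟨u + (c / c') • (x - u),
    hS.add_smul_sub_mem hu hx ⟨by positivity, div_le_one_of_le₀ hcc' hc'.le⟩, ?_⟩
  calc g (u + (c / c') • (x - u)) = g u + (c' * (c / c')) • (x - u) := by rw [hg, hg]; module
    _ = f x := by rw [← hfg, mul_div_cancel₀ _ hc'.ne', hf, hf]; module

theorem homothety_apply_eq_self_of_mem_exposedPoints {S : Set E} {u : E}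
    (hf : ∀ z, f z = c • (z + v)) (hc : 0 < c) (hfS : MapsTo f S S)
    (hu : u ∈ S.exposedPoints ℝ) (huf : u ∈ f '' S) : f u = u := by
  obtain ⟨-, l, hl⟩ := hu
  obtain ⟨x, hx, rfl⟩ := huf
  -- `l ∘ f = c • l + const` with `c > 0`, and `f x` is the unique maximiser of `l` on `S`.
  have hlf : ∀ z, l (f z) = c * l z + c * l v := fun z => by
    rw [hf, map_smul, map_add, smul_eq_mul, mul_add]
  rcases le_or_gt (l (f x)) (l (f (f x))) with h | h
  · exact (hl _ (hfS (hfS hx))).2 h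
  · have hlt : c * l (f x) < c * l x := by linarith [hlf (f x), hlf x]
    have hx' := (hl x hx).2 (lt_of_mul_lt_mul_left hlt hc.le).le
    rw [← hx']
    exact hx'.symm

end Homothety

section Words

variable {X : Type*} {N : ℕ} (φ : Fin N → X → X)

theorem image_phiWord_cons (i : Fin N) (I : List (Fin N)) (S : Set X) :
    phiWord φ (i :: I) '' S = φ i '' (phiWord φ I '' S) :=
  image_comp _ _ _

theorem mapsTo_phiWord {S : Set X} (h : ∀ j, MapsTo (φ j) S S) : ∀ I, MapsTo (phiWord φ I) S S
  | [] => mapsTo_id S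
  | i :: I => (h i).comp (mapsTo_phiWord h I)

end Words

section GasketWords

variable {E : Type*} [NormedAddCommGroup E] [NormedSpace ℝ E] {N : ℕ} {r : Fin N → ℝ}
  {d : Fin N → E} {φ : Fin N → E → E} {Δ V K : Set E} {c D : ℝ}

theorem diam_image_phiWord_le (hr : ∀ j, 0 ≤ r j ∧ r j ≤ 1)
    (hφ : ∀ j z, φ j z = r j • (z + d j)) (S : Set E) :
    ∀ I, diam (phiWord φ I '' S) ≤ diam S
  | [] => by simp [phiWord]
  | i :: I => by
    rw [image_phiWord_cons, diam_image_homothety (hφ i) (hr i).1]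
    exact (mul_le_of_le_one_left diam_nonneg (hr i).2).trans (diam_image_phiWord_le hr hφ S I)

theorem mul_diam_le_mul_dist_of_vertex_notMem (hr : ∀ j, 0 ≤ r j)
    (hφ : ∀ j z, φ j z = r j • (z + d j)) (hW : ∀ I, phiWord φ I '' K ⊆ Δ)
    (hD : ∀ I, diam (phiWord φ I '' K) ≤ D) (hfix : ∀ j, ∀ u ∈ V, u ∈ φ j '' Δ → φ j u = u)
    (hcK : ∀ u ∈ V, u ∉ K → ∀ a ∈ K, c ≤ dist a u)
    (hcPiece : ∀ u ∈ V, ∀ j, u ∉ φ j '' Δ → ∀ a ∈ φ j '' Δ, c ≤ dist a u) :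
    ∀ I, ∀ u ∈ V, u ∉ phiWord φ I '' K → ∀ a ∈ phiWord φ I '' K,
      c * diam (phiWord φ I '' K) ≤ D * dist a u
  | [], u, hu, huK, a, ha => by
    have hdiam := hD []
    simp only [phiWord, image_id] at huK ha hdiam ⊢
    exact (mul_le_mul (hcK u hu huK a ha) hdiam diam_nonneg dist_nonneg).trans_eq (mul_comm _ _)
  | j :: I, u, hu, huK, a, ha => by
    rw [image_phiWord_cons] at huK ha ⊢
    obtain ⟨a, ha, rfl⟩ := ha
    by_cases hj : u ∈ φ j '' Δ
    · have hju := hfix j u hu hj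
      have ih := mul_diam_le_mul_dist_of_vertex_notMem hr hφ hW hD hfix hcK hcPiece I u hu
        (fun h => huK ⟨u, h, hju⟩) a ha
      rw [diam_image_homothety (hφ j) (hr j), ← hju, dist_homothety (hφ j) (hr j)]
      calc c * (r j * diam (phiWord φ I '' K)) = r j * (c * diam (phiWord φ I '' K)) := by ring
        _ ≤ r j * (D * dist a u) := mul_le_mul_of_nonneg_left ih (hr j)
        _ = D * (r j * dist a u) := by ring
    · have hdiam := hD (j :: I)
      rw [image_phiWord_cons] at hdiam
      exact (mul_le_mul (hcPiece u hu j hj _ ⟨a, hW I ha, rfl⟩) hdiam diam_nonneg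
        dist_nonneg).trans_eq (mul_comm _ _)

theorem mul_diam_le_of_apply_vertex_notMem (hr : ∀ j, 0 ≤ r j)
    (hφ : ∀ j z, φ j z = r j • (z + d j)) (hW : ∀ I, phiWord φ I '' K ⊆ Δ)
    (hD : ∀ I, diam (phiWord φ I '' K) ≤ D) (hfix : ∀ j, ∀ u ∈ V, u ∈ φ j '' Δ → φ j u = u)
    (hcK : ∀ u ∈ V, u ∉ K → ∀ a ∈ K, c ≤ dist a u)
    (hcPiece : ∀ u ∈ V, ∀ j, u ∉ φ j '' Δ → ∀ a ∈ φ j '' Δ, c ≤ dist a u)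
    {i : Fin N} {I : List (Fin N)} {u a : E} {δ : ℝ} (hu : u ∈ V)
    (hnot : φ i u ∉ φ i '' (phiWord φ I '' K)) (ha : a ∈ phiWord φ I '' K)
    (hδ : dist (φ i a) (φ i u) ≤ 2 * δ) :
    c * diam (φ i '' (phiWord φ I '' K)) ≤ 2 * D * δ := by
  have hD0 : 0 ≤ D := diam_nonneg.trans (hD [])
  have hL := mul_diam_le_mul_dist_of_vertex_notMem hr hφ hW hD hfix hcK hcPiece I u hu
    (fun h => hnot ⟨u, h, rfl⟩) a ha
  rw [dist_homothety (hφ i) (hr i)] at hδ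
  rw [diam_image_homothety (hφ i) (hr i)]
  calc c * (r i * diam (phiWord φ I '' K)) = r i * (c * diam (phiWord φ I '' K)) := by ring
    _ ≤ r i * (D * dist a u) := mul_le_mul_of_nonneg_left hL (hr i)
    _ = D * (r i * dist a u) := by ring
    _ ≤ D * (2 * δ) := mul_le_mul_of_nonneg_left hδ hD0
    _ = 2 * D * δ := by ring

theorem mul_min_diam_le_mul_dist_of_ne (hr : ∀ j, 0 ≤ r j)
    (hφ : ∀ j z, φ j z = r j • (z + d j)) (hc : 0 ≤ c) (hW : ∀ I, phiWord φ I '' K ⊆ Δ)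
    (hD : ∀ I, diam (phiWord φ I '' K) ≤ D) (hfix : ∀ j, ∀ u ∈ V, u ∈ φ j '' Δ → φ j u = u)
    (hcK : ∀ u ∈ V, u ∉ K → ∀ a ∈ K, c ≤ dist a u)
    (hcPiece : ∀ u ∈ V, ∀ j, u ∉ φ j '' Δ → ∀ a ∈ φ j '' Δ, c ≤ dist a u)
    (hcDisj : ∀ i j, φ i '' Δ ∩ φ j '' Δ = ∅ → ∀ a ∈ φ i '' Δ, ∀ b ∈ φ j '' Δ, c ≤ dist a b)
    (hvert : ∀ i j, i ≠ j → φ i '' Δ ∩ φ j '' Δ ⊆ φ i '' V ∩ φ j '' V)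
    (hangle : ∀ i j, i ≠ j → ∀ u₁ ∈ V, ∀ u₂ ∈ V, φ i u₁ = φ j u₂ →
      ∀ a ∈ Δ, ∀ b ∈ Δ, dist (φ i a) (φ i u₁) ≤ 2 * dist (φ i a) (φ j b))
    {i j : Fin N} (hij : i ≠ j) {I J : List (Fin N)}
    (hIJ : φ i '' (phiWord φ I '' K) ∩ φ j '' (phiWord φ J '' K) = ∅) {a b : E}
    (ha : a ∈ phiWord φ I '' K) (hb : b ∈ phiWord φ J '' K) :
    c * min (diam (φ i '' (phiWord φ I '' K))) (diam (φ j '' (phiWord φ J '' K))) ≤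
      2 * D * dist (φ i a) (φ j b) := by
  by_cases hcap : φ i '' Δ ∩ φ j '' Δ = ∅
  · have hdist := hcDisj i j hcap _ ⟨a, hW I ha, rfl⟩ _ ⟨b, hW J hb, rfl⟩
    have hdiam := hD (i :: I)
    rw [image_phiWord_cons] at hdiam
    have hD0 : 0 ≤ D := diam_nonneg.trans (hD [])
    calc _ ≤ dist (φ i a) (φ j b) * D :=
          mul_le_mul hdist ((min_le_left _ _).trans hdiam) (le_min diam_nonneg diam_nonneg)
            dist_nonneg
      _ ≤ 2 * D * dist (φ i a) (φ j b) := by nlinarith [dist_nonneg (x := φ i a) (y := φ j b)]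
  obtain ⟨v, hv⟩ := nonempty_iff_ne_empty.2 hcap
  obtain ⟨⟨u₁, hu₁, rfl⟩, ⟨u₂, hu₂, hu₂v⟩⟩ := hvert i j hij hv
  have hv' : φ i u₁ ∉ φ i '' (phiWord φ I '' K) ∨ φ i u₁ ∉ φ j '' (phiWord φ J '' K) := by
    by_contra! h
    exact (hIJ ▸ h : φ i u₁ ∈ (∅ : Set E))
  rcases hv' with hv' | hv'
  · calc _ ≤ c * diam (φ i '' (phiWord φ I '' K)) :=
          mul_le_mul_of_nonneg_left (min_le_left _ _) hc
      _ ≤ _ := mul_diam_le_of_apply_vertex_notMem hr hφ hW hD hfix hcK hcPiece hu₁ hv' ha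
          (hangle i j hij u₁ hu₁ u₂ hu₂ hu₂v.symm a (hW I ha) b (hW J hb))
  · rw [← hu₂v] at hv'
    calc _ ≤ c * diam (φ j '' (phiWord φ J '' K)) :=
          mul_le_mul_of_nonneg_left (min_le_right _ _) hc
      _ ≤ _ := mul_diam_le_of_apply_vertex_notMem hr hφ hW hD hfix hcK hcPiece hu₂ hv' hb
          (dist_comm (φ i a) (φ j b) ▸
            hangle j i hij.symm u₂ hu₂ u₁ hu₁ hu₂v b (hW J hb) a (hW I ha))

theorem mul_min_diam_le_mul_dist (hr : ∀ j, 0 ≤ r j)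
    (hφ : ∀ j z, φ j z = r j • (z + d j)) (hc : 0 ≤ c) (hW : ∀ I, phiWord φ I '' K ⊆ Δ)
    (hD : ∀ I, diam (phiWord φ I '' K) ≤ D) (hfix : ∀ j, ∀ u ∈ V, u ∈ φ j '' Δ → φ j u = u)
    (hcK : ∀ u ∈ V, u ∉ K → ∀ a ∈ K, c ≤ dist a u)
    (hcPiece : ∀ u ∈ V, ∀ j, u ∉ φ j '' Δ → ∀ a ∈ φ j '' Δ, c ≤ dist a u)
    (hcDisj : ∀ i j, φ i '' Δ ∩ φ j '' Δ = ∅ → ∀ a ∈ φ i '' Δ, ∀ b ∈ φ j '' Δ, c ≤ dist a b)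
    (hvert : ∀ i j, i ≠ j → φ i '' Δ ∩ φ j '' Δ ⊆ φ i '' V ∩ φ j '' V)
    (hangle : ∀ i j, i ≠ j → ∀ u₁ ∈ V, ∀ u₂ ∈ V, φ i u₁ = φ j u₂ →
      ∀ a ∈ Δ, ∀ b ∈ Δ, dist (φ i a) (φ i u₁) ≤ 2 * dist (φ i a) (φ j b))
    (hKne : K.Nonempty) :
    ∀ I J : List (Fin N), I.length = J.length → phiWord φ I '' K ∩ phiWord φ J '' K = ∅ →
      ∀ a ∈ phiWord φ I '' K, ∀ b ∈ phiWord φ J '' K,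
        c * min (diam (phiWord φ I '' K)) (diam (phiWord φ J '' K)) ≤ 2 * D * dist a b
  | [], [], _, hIJ, _, _, _, _ => by simp [phiWord, hKne.ne_empty] at hIJ
  | [], _ :: _, hlen, _, _, _, _, _ => by simp at hlen
  | _ :: _, [], hlen, _, _, _, _, _ => by simp at hlen
  | i :: I, j :: J, hlen, hIJ, _, ha, _, hb => by
    rw [image_phiWord_cons, image_phiWord_cons] at hIJ ⊢
    rw [image_phiWord_cons] at ha hb
    obtain ⟨a, ha, rfl⟩ := ha
    obtain ⟨b, hb, rfl⟩ := hb
    rcases eq_or_ne i j with rfl | hij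
    · have hdisj : phiWord φ I '' K ∩ phiWord φ J '' K = ∅ :=
        image_eq_empty.1 (subset_empty_iff.1 ((image_inter_subset _ _ _).trans hIJ.subset))
      have ih := mul_min_diam_le_mul_dist hr hφ hc hW hD hfix hcK hcPiece hcDisj hvert hangle
        hKne I J (by simpa using hlen) hdisj a ha b hb
      rw [diam_image_homothety (hφ i) (hr i), diam_image_homothety (hφ i) (hr i),
        dist_homothety (hφ i) (hr i), ← mul_min_of_nonneg _ _ (hr i)]
      calc c * (r i * min (diam (phiWord φ I '' K)) (diam (phiWord φ J '' K)))
          = r i * (c * min (diam (phiWord φ I '' K)) (diam (phiWord φ J '' K))) := by ring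
        _ ≤ r i * (2 * D * dist a b) := mul_le_mul_of_nonneg_left ih (hr i)
        _ = 2 * D * (r i * dist a b) := by ring
    · exact mul_min_diam_le_mul_dist_of_ne hr hφ hc hW hD hfix hcK hcPiece hcDisj hvert hangle
        hij hIJ ha hb

theorem apply_vertex_ne (hr : ∀ j, 0 < r j)
    (hφ : ∀ j z, φ j z = r j • (z + d j)) (hΔ : Convex ℝ Δ) (hVΔ : V ⊆ Δ) (hΔV : ¬ Δ ⊆ V)
    (hvert : ∀ i j, i ≠ j → φ i '' Δ ∩ φ j '' Δ ⊆ φ i '' V ∩ φ j '' V) {i j : Fin N}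
    (hij : i ≠ j) {u : E} (hu : u ∈ V) : φ i u ≠ φ j u := by
  wlog hle : r i ≤ r j generalizing i j
  · exact fun h => this hij.symm (le_of_not_ge hle) h.symm
  intro h
  have hnest := image_subset_image_of_homothety_apply_eq (hφ i) (hφ j) (hr i) hle hΔ (hVΔ hu) h
  have hsub : φ i '' Δ ⊆ φ i '' V := fun w hw => (hvert i j hij ⟨hw, hnest hw⟩).1
  exact hΔV ((image_subset_image_iff (homothety_injective (hφ i) (hr i).ne')).1 hsub)

end GasketWords

section Triangle

theorem inner_fin_two (x y : ℝ²) : ⟪x, y⟫ = x 0 * y 0 + x 1 * y 1 := by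
  simp only [PiLp.inner_apply, RCLike.inner_apply, Real.ringHom_apply, Fin.sum_univ_two]
  ring

theorem norm_sq_fin_two (x : ℝ²) : ‖x‖ ^ 2 = x 0 ^ 2 + x 1 ^ 2 := by
  simp [EuclideanSpace.norm_sq_eq, Fin.sum_univ_two]

theorem eq_vec2_iff {z : ℝ²} {a b : ℝ} : z = !₂[a, b] ↔ z 0 = a ∧ z 1 = b := by
  refine ⟨fun h => by simp [h], fun ⟨h0, h1⟩ => ?_⟩
  ext i; fin_cases i <;> simp [h0, h1]

theorem inner_le_half_of_sqrt_three_mul_le {p q : ℝ²}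
    (h : 0 ≤ ⟪p, q⟫ → √3 * ⟪p, q⟫ ≤ |p 0 * q 1 - p 1 * q 0|) :
    ⟪p, q⟫ ≤ 1 / 2 * (‖p‖ * ‖q‖) := by
  rcases le_or_gt ⟪p, q⟫ 0 with h0 | h0
  · exact h0.trans (by positivity)
  have hlagrange : (‖p‖ * ‖q‖) ^ 2 = ⟪p, q⟫ ^ 2 + (p 0 * q 1 - p 1 * q 0) ^ 2 := by
    rw [mul_pow, norm_sq_fin_two, norm_sq_fin_two, inner_fin_two]; ring
  have h3 : 3 * ⟪p, q⟫ ^ 2 ≤ (p 0 * q 1 - p 1 * q 0) ^ 2 := by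
    have := pow_le_pow_left₀ (by positivity) (h h0.le) 2
    rwa [mul_pow, Real.sq_sqrt (by norm_num), sq_abs] at this
  nlinarith [norm_nonneg p, norm_nonneg q, mul_nonneg (norm_nonneg p) (norm_nonneg q)]

def triangle : Set ℝ² :=
  {z | 0 ≤ z 1 ∧ z 1 ≤ √3 * z 0 ∧ z 1 ≤ √3 * (1 - z 0)}

def triangleVertices : Set ℝ² :=
  {z | (z 0 = 0 ∧ z 1 = 0) ∨ (z 0 = 1 ∧ z 1 = 0) ∨ (z 0 = 1 / 2 ∧ z 1 = √3 / 2)}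

theorem triangleVertices_eq : triangleVertices = {!₂[0, 0], !₂[1, 0], !₂[1 / 2, √3 / 2]} := by
  ext z; simp [triangleVertices, eq_vec2_iff]

theorem triangleVertices_finite : triangleVertices.Finite :=
  triangleVertices_eq ▸ toFinite _

theorem convex_triangle : Convex ℝ triangle := by
  rintro x ⟨hx1, hx2, hx3⟩ y ⟨hy1, hy2, hy3⟩ a b ha hb hab
  refine ⟨?_, ?_, ?_⟩ <;> simp only [PiLp.add_apply, PiLp.smul_apply, smul_eq_mul]
  · positivity
  · nlinarith [mul_le_mul_of_nonneg_left hx2 ha, mul_le_mul_of_nonneg_left hy2 hb]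
  · nlinarith [mul_le_mul_of_nonneg_left hx3 ha, mul_le_mul_of_nonneg_left hy3 hb]

theorem isCompact_triangle : IsCompact triangle := by
  have hs : √3 ^ 2 = 3 := Real.sq_sqrt (by norm_num)
  refine isCompact_of_isClosed_isBounded ?_ ((isBounded_closedBall (x := 0) (r := 2)).subset ?_)
  · simp only [triangle, ofPred_and]
    exact (isClosed_le continuous_const (by fun_prop)).inter
      ((isClosed_le (by fun_prop) (by fun_prop)).inter (isClosed_le (by fun_prop) (by fun_prop)))
  · rintro z ⟨h1, h2, h3⟩
    rw [mem_closedBall_zero_iff]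
    refine le_of_sq_le_sq ?_ (by norm_num)
    rw [norm_sq_fin_two]
    nlinarith

theorem triangleVertices_subset_exposedPoints : triangleVertices ⊆ triangle.exposedPoints ℝ := by
  have hs : √3 ^ 2 = 3 := Real.sq_sqrt (by norm_num)
  have hs0 : 0 < √3 := by positivity
  have key : ∀ a b p q : ℝ, !₂[p, q] ∈ triangle → (∀ y ∈ triangle,
      a * y 0 + b * y 1 ≤ a * p + b * q ∧
        (a * p + b * q ≤ a * y 0 + b * y 1 → y 0 = p ∧ y 1 = q)) →
      !₂[p, q] ∈ triangle.exposedPoints ℝ := fun a b p q hu h =>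
    ⟨hu, innerSL ℝ !₂[a, b], fun y hy => by simpa [inner_fin_two, eq_vec2_iff] using h y hy⟩
  rw [triangleVertices_eq]
  rintro u (rfl | rfl | rfl)
  · exact key (-√3) (-1) 0 0 (by simp [triangle]) fun y ⟨h1, h2, h3⟩ =>
      ⟨by nlinarith, fun h => ⟨by nlinarith, by nlinarith⟩⟩
  · exact key √3 (-1) 1 0 (by simp [triangle]) fun y ⟨h1, h2, h3⟩ =>
      ⟨by nlinarith, fun h => ⟨by nlinarith, by nlinarith⟩⟩
  · exact key 0 1 (1 / 2) (√3 / 2) (by norm_num [triangle]; constructor <;> linarith)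
      fun y ⟨h1, h2, h3⟩ => ⟨by nlinarith, fun h => ⟨by nlinarith, by nlinarith⟩⟩

theorem triangle_nonempty : triangle.Nonempty :=
  ⟨!₂[0, 0], by simp [triangle]⟩

theorem triangle_not_subset_vertices : ¬ triangle ⊆ triangleVertices := by
  intro h
  have hmid := h (show !₂[1 / 2, 0] ∈ triangle by norm_num [triangle])
  norm_num [triangleVertices] at hmid
  exact (by positivity : (0 : ℝ) < √3 / 2).ne hmid

theorem inner_sub_le_half_of_ordered_vertices {x y u v : ℝ²} (hx : x ∈ triangle)
    (hy : y ∈ triangle) (huv : (u = !₂[0, 0] ∧ v = !₂[1, 0]) ∨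
      (u = !₂[0, 0] ∧ v = !₂[1 / 2, √3 / 2]) ∨ (u = !₂[1, 0] ∧ v = !₂[1 / 2, √3 / 2])) :
    ⟪x - u, y - v⟫ ≤ 1 / 2 * (‖x - u‖ * ‖y - v‖) := by
  -- Seen from a vertex, the triangle fills a 60° cone; the cones at `u` and `v` are at least
  -- 60° apart, which in coordinates reads `√3 ⟪p, q⟫ ≤ ± det (p, q)`.
  obtain ⟨hx1, hx2, hx3⟩ := hx
  obtain ⟨hy1, hy2, hy3⟩ := hy
  have hs : √3 ^ 2 = 3 := Real.sq_sqrt (by norm_num)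
  have hs0 : 0 < √3 := by positivity
  apply inner_le_half_of_sqrt_three_mul_le
  rw [inner_fin_two]
  intro h0
  rcases huv with ⟨rfl, rfl⟩ | ⟨rfl, rfl⟩ | ⟨rfl, rfl⟩ <;>
    simp only [Fin.isValue, PiLp.sub_apply, Matrix.cons_val_zero, Matrix.cons_val_one,
      Matrix.cons_val_fin_one, sub_zero, one_div] at h0 ⊢
  · refine le_trans ?_ (le_abs_self _)
    nlinarith [mul_nonneg (sub_nonneg.2 hx2) (sub_nonneg.2 hy3), mul_nonneg hx1 hy1,
      mul_nonneg (sub_nonneg.2 hx2) hy1, mul_nonneg hx1 (sub_nonneg.2 hy3)]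
  · refine le_trans ?_ (neg_le_abs _)
    nlinarith [mul_nonneg (sub_nonneg.2 hx2) (sub_nonneg.2 hy2),
      mul_nonneg (sub_nonneg.2 hx2) (sub_nonneg.2 hy3),
      mul_nonneg hx1 (sub_nonneg.2 hy2), mul_nonneg hx1 (sub_nonneg.2 hy3)]
  · refine le_trans ?_ (le_abs_self _)
    nlinarith [mul_nonneg (sub_nonneg.2 hx3) (sub_nonneg.2 hy2),
      mul_nonneg (sub_nonneg.2 hx3) (sub_nonneg.2 hy3),
      mul_nonneg hx1 (sub_nonneg.2 hy2), mul_nonneg hx1 (sub_nonneg.2 hy3)]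

theorem inner_sub_vertex_le_half {x y u v : ℝ²} (hx : x ∈ triangle) (hy : y ∈ triangle)
    (hu : u ∈ triangleVertices) (hv : v ∈ triangleVertices) (huv : u ≠ v) :
    ⟪x - u, y - v⟫ ≤ 1 / 2 * (‖x - u‖ * ‖y - v‖) := by
  have hswap : ⟪y - v, x - u⟫ ≤ 1 / 2 * (‖y - v‖ * ‖x - u‖) →
      ⟪x - u, y - v⟫ ≤ 1 / 2 * (‖x - u‖ * ‖y - v‖) := by
    rw [real_inner_comm, mul_comm ‖y - v‖]; exact id
  rw [triangleVertices_eq] at hu hv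
  rcases hu with rfl | rfl | rfl <;> rcases hv with rfl | rfl | rfl
  · exact absurd rfl huv
  · exact inner_sub_le_half_of_ordered_vertices hx hy (.inl ⟨rfl, rfl⟩)
  · exact inner_sub_le_half_of_ordered_vertices hx hy (.inr <| .inl ⟨rfl, rfl⟩)
  · exact hswap (inner_sub_le_half_of_ordered_vertices hy hx (.inl ⟨rfl, rfl⟩))
  · exact absurd rfl huv
  · exact inner_sub_le_half_of_ordered_vertices hx hy (.inr <| .inr ⟨rfl, rfl⟩)
  · exact hswap (inner_sub_le_half_of_ordered_vertices hy hx (.inr <| .inl ⟨rfl, rfl⟩))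
  · exact hswap (inner_sub_le_half_of_ordered_vertices hy hx (.inr <| .inr ⟨rfl, rfl⟩))
  · exact absurd rfl huv

end Triangle

theorem gasket_dist_le_two_mul_dist {N : ℕ} {r : Fin N → ℝ} {d : Fin N → ℝ²}
    {φ : Fin N → ℝ² → ℝ²} (hr : ∀ j, 0 < r j) (hφ : ∀ j z, φ j z = r j • (z + d j))
    (hvert : ∀ i j, i ≠ j → φ i '' triangle ∩ φ j '' triangle ⊆
      φ i '' triangleVertices ∩ φ j '' triangleVertices) :
    ∀ i j, i ≠ j → ∀ u₁ ∈ triangleVertices, ∀ u₂ ∈ triangleVertices, φ i u₁ = φ j u₂ →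
      ∀ a ∈ triangle, ∀ b ∈ triangle, dist (φ i a) (φ i u₁) ≤ 2 * dist (φ i a) (φ j b) := by
  intro i j hij u₁ hu₁ u₂ hu₂ heq a ha b hb
  have hne : u₁ ≠ u₂ := by
    rintro rfl
    exact apply_vertex_ne hr hφ convex_triangle
      (triangleVertices_subset_exposedPoints.trans exposedPoints_subset)
      triangle_not_subset_vertices hvert hij hu₁ heq
  have hcone := inner_sub_vertex_le_half ha hb hu₁ hu₂ hne
  rw [dist_eq_norm, dist_eq_norm,
    show φ i a - φ j b = (φ i a - φ i u₁) - (φ j b - φ j u₂) by rw [heq]; abel]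
  apply norm_le_two_mul_norm_sub_of_inner_le_half
  rw [homothety_sub (hφ i), homothety_sub (hφ j), real_inner_smul_left, real_inner_smul_right,
    norm_smul, norm_smul, Real.norm_of_nonneg (hr i).le, Real.norm_of_nonneg (hr j).le]
  calc r i * (r j * ⟪a - u₁, b - u₂⟫)
      ≤ r i * (r j * (1 / 2 * (‖a - u₁‖ * ‖b - u₂‖))) :=
        mul_le_mul_of_nonneg_left (mul_le_mul_of_nonneg_left hcone (hr j).le) (hr i).le
    _ = 1 / 2 * (r i * ‖a - u₁‖ * (r j * ‖b - u₂‖)) := by ring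

/-- a fractal gasket satisfies the sharp separation condition. -/
theorem stmt19 {N : ℕ}
    (r : Fin N → ℝ) (d : Fin N → EuclideanSpace ℝ (Fin 2))
    (hr : ∀ j, 0 < r j ∧ r j < 1)
    (φ : Fin N → EuclideanSpace ℝ (Fin 2) → EuclideanSpace ℝ (Fin 2))
    (hφ : ∀ j z, φ j z = r j • (z + d j))
    -- the regular triangle Δ with vertices (0,0), (1,0), (1/2, √3/2)
    (Δ V : Set (EuclideanSpace ℝ (Fin 2)))
    (hΔ : Δ = {z | 0 ≤ z 1 ∧ z 1 ≤ Real.sqrt 3 * z 0 ∧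
      z 1 ≤ Real.sqrt 3 * (1 - z 0)})
    (hV : V = {z | (z 0 = 0 ∧ z 1 = 0) ∨ (z 0 = 1 ∧ z 1 = 0) ∨
      (z 0 = 1 / 2 ∧ z 1 = Real.sqrt 3 / 2)})
    -- fractal gasket conditions
    (hsub : ∀ j, φ j '' Δ ⊆ Δ)
    (hvert : ∀ i j, i ≠ j →
      (φ i '' Δ) ∩ (φ j '' Δ) ⊆ (φ i '' V) ∩ (φ j '' V))
    -- the attractor K
    (K : Set (EuclideanSpace ℝ (Fin 2)))
    (hKne : K.Nonempty) (hKcomp : IsCompact K)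
    (hK : K = ⋃ j, φ j '' K) :
    -- sharp separation condition
    ∃ C' > (0 : ℝ), ∀ k : ℕ, 1 ≤ k → ∀ I J : List (Fin N),
      I.length = k → J.length = k →
      (phiWord φ I '' K) ∩ (phiWord φ J '' K) = ∅ →
      ∀ a ∈ phiWord φ I '' K, ∀ b ∈ phiWord φ J '' K,
        C' * min (Metric.diam (phiWord φ I '' K))
            (Metric.diam (phiWord φ J '' K)) ≤ dist a b := by
  obtain rfl : Δ = triangle := hΔ
  obtain rfl : V = triangleVertices := hV
  have hr0 : ∀ j, 0 ≤ r j := fun j => (hr j).1.le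
  have hmaps : ∀ j, MapsTo (φ j) triangle triangle := fun j => mapsTo_iff_image_subset.2 (hsub j)
  have hKΔ : K ⊆ triangle := subset_of_eq_iUnion_image (fun j => ⟨hr0 j, (hr j).2⟩)
    (fun j a b => (dist_homothety (hφ j) (hr0 j) a b).le) hmaps isCompact_triangle
    triangle_nonempty hKcomp hKne hK
  obtain ⟨c, hc, hcK, hcPiece, hcDisj⟩ := exists_pos_separation
    (fun j => homothety_continuous (hφ j)) isCompact_triangle triangleVertices_finite hKcomp
  have hbound := mul_min_diam_le_mul_dist hr0 hφ hc.le
    (fun I => (image_mono hKΔ).trans (mapsTo_phiWord φ hmaps I).image_subset)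
    (diam_image_phiWord_le (fun j => ⟨hr0 j, (hr j).2.le⟩) hφ K)
    (fun j u hu => homothety_apply_eq_self_of_mem_exposedPoints (hφ j) (hr j).1 (hmaps j)
      (triangleVertices_subset_exposedPoints hu))
    hcK hcPiece hcDisj hvert (gasket_dist_le_two_mul_dist (fun j => (hr j).1) hφ hvert) hKne
  refine ⟨c / (2 * diam K + 1), by positivity, fun k _ I J hI hJ hIJ a ha b hb => ?_⟩
  have hab := hbound I J (hI.trans hJ.symm) hIJ a ha b hb
  rw [div_mul_eq_mul_div, div_le_iff₀ (by positivity)]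
  nlinarith [dist_nonneg (x := a) (y := b)]
end
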